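/- arXiv:1804.01478 — 6 statements merged into one kernel-verified Lean document; each statement's English description precedes it below -/
import Mathlib

section
/- Let m = p_1⋯p_t be a squarefree positive integer with pairwise distinct prime factors p_1, …, p_t (t ≥ 1). Then the m-th cyclotomic polynomial Φ_m(X) is a greatest common divisor in ℤ[X] of the t polynomials g_k(X) := Σ_{i=0}^{p_k−1} X^{i·(m/p_k)} for k = 1, …, t; that is, Φ_m divides each g_k, and every polynomial in ℤ[X] that divides all of g_1, …, g_t divides Φ_m. -/
/-!
Write `q = m / p_k`. Since `g_k (X^q - 1) = X^m - 1`, the polynomial `g_k` is the product of the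
`Φ_d` with `d ∣ m`, `d ∤ q`; in particular `Φ_m ∣ g_k`. Conversely, a common
divisor `f` of the `g_k` divides `X^m - 1 = ∏_{d ∣ m} Φ_d` and is primitive. Every proper divisor
`d` of the squarefree `m` misses some prime `p_k`, hence divides `m / p_k`, so `Φ_d` does not occur
in `g_k`; distinct cyclotomic polynomials being coprime over `ℚ`, `f` is coprime to `Φ_d`. Thus
`f ∣ Φ_m` over `ℚ`, and by Gauss's lemma over `ℤ`.
-/

open Polynomial Finset

namespace Polynomial

variable {R : Type*} [CommRing R]

theorem sum_range_X_pow_mul_mul_X_pow_sub_one (r q : ℕ) :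
    (∑ i ∈ range r, (X : R[X]) ^ (i * q)) * (X ^ q - 1) = X ^ (r * q) - 1 := by
  simp only [pow_mul']
  exact geom_sum_mul _ _

theorem sum_range_X_pow_mul_dvd_X_pow_sub_one (r q : ℕ) :
    ∑ i ∈ range r, (X : R[X]) ^ (i * q) ∣ X ^ (r * q) - 1 :=
  Dvd.intro _ (sum_range_X_pow_mul_mul_X_pow_sub_one r q)

theorem sum_range_X_pow_mul_eq_prod_cyclotomic {r q : ℕ} (hrq : r * q ≠ 0) :
    ∑ i ∈ range r, (X : R[X]) ^ (i * q) =
      ∏ d ∈ (r * q).divisors \ q.divisors, cyclotomic d R := by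
  have hq : q ≠ 0 := right_ne_zero_of_mul hrq
  refine (monic_X_pow_sub_C (1 : R) hq).isRegular.right ?_
  simp only [C_1]
  rw [sum_range_X_pow_mul_mul_X_pow_sub_one, mul_comm (∏ d ∈ _, _),
    X_pow_sub_one_mul_prod_cyclotomic_eq_X_pow_sub_one_of_dvd R (dvd_mul_left q r) hrq]

theorem cyclotomic_dvd_sum_range_X_pow_mul {r q : ℕ} (hr : 1 < r) (hq : q ≠ 0) :
    cyclotomic (r * q) R ∣ ∑ i ∈ range r, (X : R[X]) ^ (i * q) := by
  have hrq : r * q ≠ 0 := mul_ne_zero (by omega) hq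
  rw [sum_range_X_pow_mul_eq_prod_cyclotomic hrq]
  refine dvd_prod_of_mem _ (mem_sdiff.2 ⟨Nat.mem_divisors_self _ hrq, fun h => ?_⟩)
  exact (lt_mul_left (Nat.pos_of_ne_zero hq) hr).not_ge (Nat.divisor_le h)

theorem dvd_cyclotomic_of_dvd_X_pow_sub_one {n : ℕ} (hn : n ≠ 0) {f : R[X]}
    (hf : f ∣ X ^ n - 1) (hcop : ∀ d ∈ n.properDivisors, IsCoprime f (cyclotomic d R)) :
    f ∣ cyclotomic n R := by
  rw [← prod_cyclotomic_eq_X_pow_sub_one (Nat.pos_of_ne_zero hn),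
    ← Nat.cons_self_properDivisors hn, prod_cons] at hf
  exact (IsCoprime.prod_right hcop).dvd_of_dvd_mul_right hf

theorem isCoprime_cyclotomic_of_dvd_prod {s : Finset ℕ} {f : ℚ[X]}
    (hf : f ∣ ∏ e ∈ s, cyclotomic e ℚ) {d : ℕ} (hd : d ∉ s) : IsCoprime f (cyclotomic d ℚ) :=
  (IsCoprime.prod_left fun _ he => cyclotomic.isCoprime_rat (ne_of_mem_of_not_mem he hd))
    |>.of_isCoprime_of_dvd_left hf

theorem dvd_cyclotomic_int_of_dvd_X_pow_sub_one {n : ℕ} (hn : n ≠ 0) {f : ℤ[X]}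
    (hf : f ∣ X ^ n - 1)
    (hcop : ∀ d ∈ n.properDivisors, ∃ s : Finset ℕ, d ∉ s ∧ f ∣ ∏ e ∈ s, cyclotomic e ℤ) :
    f ∣ cyclotomic n ℤ := by
  have hprim : f.IsPrimitive :=
    isPrimitive_of_dvd (monic_X_pow_sub_C (1 : ℤ) hn).isPrimitive (by simpa using hf)
  rw [IsPrimitive.Int.dvd_iff_map_cast_dvd_map_cast _ _ hprim, map_cyclotomic_int]
  refine dvd_cyclotomic_of_dvd_X_pow_sub_one hn
    (by simpa using map_dvd (Int.castRingHom ℚ) hf) fun d hd => ?_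
  obtain ⟨s, hds, hfs⟩ := hcop d hd
  refine isCoprime_cyclotomic_of_dvd_prod ?_ hds
  simpa [Polynomial.map_prod] using map_dvd (Int.castRingHom ℚ) hfs

end Polynomial

theorem Nat.dvd_div_of_dvd_of_not_dvd {p d m : ℕ} (hp : p.Prime) (hpm : p ∣ m) (hdm : d ∣ m)
    (hpd : ¬ p ∣ d) : d ∣ m / p :=
  (Nat.coprime_comm.1 (hp.coprime_iff_not_dvd.2 hpd)).dvd_mul_left.1
    (by rwa [Nat.mul_div_cancel' hpm])

theorem Nat.exists_not_dvd_of_mem_properDivisors_prod {ι : Type*} [Fintype ι] {p : ι → ℕ}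
    (hp : ∀ k, (p k).Prime) (hinj : Function.Injective p) {d : ℕ}
    (hd : d ∈ (∏ k, p k).properDivisors) : ∃ k, ¬ p k ∣ d := by
  by_contra! h
  have hcop : Pairwise fun i j => IsRelPrime (p i) (p j) := fun i j hij =>
    Nat.coprime_iff_isRelPrime.1 ((Nat.coprime_primes (hp i) (hp j)).2 (hinj.ne hij))
  exact (Nat.mem_properDivisors.1 hd).2.not_ge
    (Nat.le_of_dvd (Nat.pos_of_mem_properDivisors hd) (Fintype.prod_dvd_of_isRelPrime hcop h))

/-- For a squarefree positive integer `m = p 1 ⋯ p t` with pairwise distinct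
prime factors, `Φ_m` is a gcd in `ℤ[X]` of the polynomials
`g k = ∑_{i < p k} X ^ (i * (m / p k))`. -/
theorem cyclotomic_isGCD_of_squarefree
    (t : ℕ) (ht : 1 ≤ t) (p : Fin t → ℕ)
    (hp : ∀ k, (p k).Prime) (hinj : Function.Injective p)
    (m : ℕ) (hm : m = ∏ k, p k) :
    (∀ k : Fin t,
        cyclotomic m ℤ ∣ ∑ i ∈ range (p k), (X : ℤ[X]) ^ (i * (m / p k))) ∧
    (∀ f : ℤ[X],
        (∀ k : Fin t, f ∣ ∑ i ∈ range (p k), (X : ℤ[X]) ^ (i * (m / p k))) →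
        f ∣ cyclotomic m ℤ) := by
  have hm0 : m ≠ 0 := hm ▸ prod_ne_zero_iff.2 fun k _ => (hp k).ne_zero
  have hmk (k : Fin t) : p k * (m / p k) = m :=
    Nat.mul_div_cancel' (hm ▸ dvd_prod_of_mem p (mem_univ k))
  have hq (k : Fin t) : m / p k ≠ 0 := right_ne_zero_of_mul (hmk k ▸ hm0)
  have hg (k : Fin t) : ∑ i ∈ range (p k), (X : ℤ[X]) ^ (i * (m / p k)) =
      ∏ e ∈ m.divisors \ (m / p k).divisors, cyclotomic e ℤ := by
    have h := sum_range_X_pow_mul_eq_prod_cyclotomic (R := ℤ) (hmk k ▸ hm0)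
    rwa [hmk k] at h
  refine ⟨fun k => ?_, fun f hf => ?_⟩
  · have h := cyclotomic_dvd_sum_range_X_pow_mul (R := ℤ) (hp k).one_lt (hq k)
    rwa [hmk k] at h
  have hf₀ : f ∣ X ^ m - 1 := by
    have h := sum_range_X_pow_mul_dvd_X_pow_sub_one (R := ℤ) (p ⟨0, ht⟩) (m / p ⟨0, ht⟩)
    rw [hmk] at h
    exact (hf ⟨0, ht⟩).trans h
  refine dvd_cyclotomic_int_of_dvd_X_pow_sub_one hm0 hf₀ fun d hd => ?_
  obtain ⟨k, hk⟩ := Nat.exists_not_dvd_of_mem_properDivisors_prod hp hinj (hm ▸ hd)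
  have hdk : d ∣ m / p k :=
    Nat.dvd_div_of_dvd_of_not_dvd (hp k) ⟨_, (hmk k).symm⟩ (Nat.mem_properDivisors.1 hd).1 hk
  exact ⟨_, notMem_sdiff_of_mem_right (Nat.mem_divisors.2 ⟨hdk, hq k⟩), hg k ▸ hf k⟩
end

section
/- Let k be a field, p a prime, and ζ ∈ k a primitive p-th root of unity. Let R be an associative k-algebra and let u, v ∈ R be elements satisfying the quasi-commutation relation v·u = ζ·(u·v). Then (u + v)^p = u^p + v^p. -/
section QBinomial

variable {k : Type*} [Field k]

/-- q-integer `[n]_ζ = 1 + ζ + ⋯ + ζ^{n-1}`. -/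
def qint (ζ : k) (n : ℕ) : k := ∑ i ∈ Finset.range n, ζ ^ i

/-- q-factorial. -/
def qfac (ζ : k) : ℕ → k
  | 0 => 1
  | n + 1 => qfac ζ n * qint ζ (n + 1)

/-- q-binomial coefficient, via the q-Pascal recursion. -/
def qbin (ζ : k) : ℕ → ℕ → k
  | 0, 0 => 1
  | 0, _ + 1 => 0
  | _ + 1, 0 => 1
  | n + 1, i + 1 => ζ ^ (n - i) * qbin ζ n i + qbin ζ n (i + 1)

lemma qbin_zero (ζ : k) (n : ℕ) : qbin ζ n 0 = 1 := by
  cases n <;> rfl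

lemma qbin_eq_zero (ζ : k) : ∀ n i : ℕ, n < i → qbin ζ n i = 0
  | 0, i + 1, _ => rfl
  | n + 1, i + 1, h => by
      rw [qbin, qbin_eq_zero ζ n i (by omega), qbin_eq_zero ζ n (i + 1) (by omega)]
      ring

lemma qbin_self (ζ : k) : ∀ n : ℕ, qbin ζ n n = 1
  | 0 => rfl
  | n + 1 => by
      rw [qbin, qbin_self ζ n, qbin_eq_zero ζ n (n + 1) (by omega), Nat.sub_self]
      ring

lemma qint_add (ζ : k) (a b : ℕ) : qint ζ (a + b) = qint ζ a + ζ ^ a * qint ζ b := by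
  simp only [qint, Finset.sum_range_add, Finset.mul_sum, pow_add]

lemma qfac_succ (ζ : k) (n : ℕ) : qfac ζ (n + 1) = qfac ζ n * qint ζ (n + 1) := rfl

lemma qbin_mul_qfac (ζ : k) : ∀ n i : ℕ, i ≤ n →
    qbin ζ n i * (qfac ζ i * qfac ζ (n - i)) = qfac ζ n
  | 0, 0, _ => by simp [qbin, qfac]
  | n + 1, 0, _ => by simp [qbin_zero, qfac]
  | n + 1, j + 1, h => by
      rcases Nat.lt_or_ge j n with hj | hj
      · have h1 := qbin_mul_qfac ζ n j (by omega)
        have h2 := qbin_mul_qfac ζ n (j + 1) (by omega)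
        have e1 : n + 1 - (j + 1) = n - j := by omega
        have hfz : qfac ζ (n - j) = qfac ζ (n - (j + 1)) * qint ζ (n - j) := by
          conv_lhs => rw [show n - j = (n - (j + 1)) + 1 by omega]
          rw [qfac_succ, show n - (j + 1) + 1 = n - j by omega]
        rw [hfz] at h1
        rw [qfac_succ] at h2
        have hq : qint ζ (n + 1) = qint ζ (n - j) + ζ ^ (n - j) * qint ζ (j + 1) := by
          rw [← qint_add]; congr 1; omega
        rw [qbin, e1, qfac_succ ζ j, qfac_succ ζ n, hq, hfz]
        linear_combination (ζ ^ (n - j) * qint ζ (j + 1)) * h1 + (qint ζ (n - j)) * h2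
      · have hjn : j = n := by omega
        rw [hjn, qbin, qbin_self, qbin_eq_zero ζ n (n + 1) (by omega), Nat.sub_self,
          Nat.sub_self]
        show (ζ ^ 0 * 1 + 0) * (qfac ζ (n + 1) * qfac ζ 0) = qfac ζ (n + 1)
        simp [qfac]

end QBinomial

section Expansion

variable {k : Type*} [Field k] {R : Type*} [Ring R] [Algebra k R]

lemma central_shuffle (a : k) (x y : R) :
    x * (algebraMap k R a * y) = algebraMap k R a * (x * y) := by
  rw [← mul_assoc, ← Algebra.commutes, mul_assoc]

lemma pow_mul_qcomm (ζ : k) (u v : R) (huv : v * u = algebraMap k R ζ * (u * v)) :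
    ∀ m : ℕ, v ^ m * u = algebraMap k R (ζ ^ m) * (u * v ^ m)
  | 0 => by simp
  | m + 1 => by
      have ih := pow_mul_qcomm ζ u v huv m
      calc v ^ (m + 1) * u = v ^ m * (v * u) := by rw [pow_succ, mul_assoc]
        _ = v ^ m * (algebraMap k R ζ * (u * v)) := by rw [huv]
        _ = algebraMap k R ζ * (v ^ m * (u * v)) := central_shuffle ζ _ _
        _ = algebraMap k R ζ * (v ^ m * u * v) := by rw [mul_assoc]
        _ = algebraMap k R ζ * (algebraMap k R (ζ ^ m) * (u * v ^ m) * v) := by rw [ih]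
        _ = algebraMap k R (ζ ^ (m + 1)) * (u * v ^ (m + 1)) := by
            rw [mul_assoc (algebraMap k R (ζ ^ m)), ← mul_assoc, ← map_mul,
              ← pow_succ', mul_assoc u, ← pow_succ]

lemma qbinomial_expansion (ζ : k) (u v : R)
    (huv : v * u = algebraMap k R ζ * (u * v)) :
    ∀ n : ℕ, (u + v) ^ n =
      ∑ i ∈ Finset.range (n + 1), algebraMap k R (qbin ζ n i) * (u ^ i * v ^ (n - i))
  | 0 => by simp [qbin]
  | n + 1 => by
      have ih := qbinomial_expansion ζ u v huv n
      rw [pow_succ, ih, mul_add, Finset.sum_mul, Finset.sum_mul]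
      have hA : ∀ i ∈ Finset.range (n + 1),
          algebraMap k R (qbin ζ n i) * (u ^ i * v ^ (n - i)) * u =
            algebraMap k R (ζ ^ (n - i) * qbin ζ n i) * (u ^ (i + 1) * v ^ (n - i)) := by
        intro i _
        calc algebraMap k R (qbin ζ n i) * (u ^ i * v ^ (n - i)) * u
            = algebraMap k R (qbin ζ n i) * (u ^ i * (v ^ (n - i) * u)) := by
              rw [mul_assoc, mul_assoc]
          _ = algebraMap k R (qbin ζ n i) * (u ^ i *
                (algebraMap k R (ζ ^ (n - i)) * (u * v ^ (n - i)))) := by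
              rw [pow_mul_qcomm ζ u v huv]
          _ = algebraMap k R (qbin ζ n i) *
                (algebraMap k R (ζ ^ (n - i)) * (u ^ i * (u * v ^ (n - i)))) := by
              rw [central_shuffle]
          _ = algebraMap k R (ζ ^ (n - i) * qbin ζ n i) * (u ^ (i + 1) * v ^ (n - i)) := by
              rw [← mul_assoc, ← map_mul, mul_comm (qbin ζ n i), ← mul_assoc (u ^ i),
                ← pow_succ]
      have hB : ∀ i ∈ Finset.range (n + 1),
          algebraMap k R (qbin ζ n i) * (u ^ i * v ^ (n - i)) * v =
            algebraMap k R (qbin ζ n i) * (u ^ i * v ^ (n + 1 - i)) := by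
        intro i hi
        rw [Finset.mem_range] at hi
        rw [show n + 1 - i = (n - i) + 1 by omega, pow_succ, mul_assoc, mul_assoc]
      rw [Finset.sum_congr rfl hA, Finset.sum_congr rfl hB]
      -- RHS: peel off the `i = 0` term
      rw [Finset.sum_range_succ' (fun i => algebraMap k R (qbin ζ (n + 1) i) *
        (u ^ i * v ^ (n + 1 - i))) (n + 1)]
      have hsplit : ∀ i ∈ Finset.range (n + 1),
          algebraMap k R (qbin ζ (n + 1) (i + 1)) * (u ^ (i + 1) * v ^ (n + 1 - (i + 1))) =
            algebraMap k R (ζ ^ (n - i) * qbin ζ n i) * (u ^ (i + 1) * v ^ (n - i)) +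
            algebraMap k R (qbin ζ n (i + 1)) * (u ^ (i + 1) * v ^ (n - i)) := by
        intro i hi
        rw [show qbin ζ (n + 1) (i + 1) = ζ ^ (n - i) * qbin ζ n i + qbin ζ n (i + 1)
            from rfl, Nat.succ_sub_succ, map_add, add_mul]
      rw [Finset.sum_congr rfl hsplit, Finset.sum_add_distrib]
      -- LHS second sum: peel off `i = 0`
      rw [Finset.sum_range_succ' (fun i => algebraMap k R (qbin ζ n i) *
        (u ^ i * v ^ (n + 1 - i))) n]
      rw [Finset.sum_range_succ (fun i => algebraMap k R (qbin ζ n (i + 1)) *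
        (u ^ (i + 1) * v ^ (n - i))) n]
      rw [qbin_eq_zero ζ n (n + 1) (by omega)]
      simp only [Nat.succ_sub_succ, qbin_zero, map_one, one_mul, pow_zero, map_zero,
        zero_mul, add_zero, Nat.sub_zero]
      abel

end Expansion

/-- if `ζ ∈ k` is a primitive `p`-th root of unity (`p` prime) and `u, v` are
elements of an associative `k`-algebra `R` with `v * u = ζ • (u * v)`, then
`(u + v) ^ p = u ^ p + v ^ p`. -/
theorem add_pow_prime_of_qcommute
    (k : Type*) [Field k] (p : ℕ) (hp : p.Prime) (ζ : k)
    (hζ1 : ζ ^ p = 1) (hζ2 : ∀ j : ℕ, 1 ≤ j → j < p → ζ ^ j ≠ 1)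
    (R : Type*) [Ring R] [Algebra k R] (u v : R)
    (huv : v * u = ζ • (u * v)) :
    (u + v) ^ p = u ^ p + v ^ p := by
  have huv' : v * u = algebraMap k R ζ * (u * v) := by
    rw [huv, Algebra.smul_def]
  have hζne1 : ζ ≠ 1 := by
    intro h; exact hζ2 1 le_rfl hp.one_lt (by simp [h])
  have hqint_ne : ∀ j : ℕ, 1 ≤ j → j < p → qint ζ j ≠ 0 := by
    intro j h1 h2 hzero
    have hg := geom_sum_mul ζ j
    rw [show ∑ i ∈ Finset.range j, ζ ^ i = qint ζ j from rfl, hzero, zero_mul] at hg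
    exact hζ2 j h1 h2 (sub_eq_zero.mp hg.symm)
  have hqintp : qint ζ p = 0 := by
    have hg := geom_sum_mul ζ p
    rw [show ∑ i ∈ Finset.range p, ζ ^ i = qint ζ p from rfl, hζ1, sub_self] at hg
    rcases mul_eq_zero.mp hg with h | h
    · exact h
    · exact absurd (sub_eq_zero.mp h) hζne1
  have hqfac_ne : ∀ m : ℕ, m < p → qfac ζ m ≠ 0 := by
    intro m
    induction m with
    | zero => intro _; simp [qfac]
    | succ n ih =>
        intro h
        rw [qfac_succ]
        exact mul_ne_zero (ih (by omega)) (hqint_ne (n + 1) (by omega) h)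
  obtain ⟨m, rfl⟩ := Nat.exists_eq_succ_of_ne_zero hp.ne_zero
  have hqfacp : qfac ζ (m + 1) = 0 := by
    rw [qfac_succ, hqintp, mul_zero]
  have hmid : ∀ i : ℕ, 1 ≤ i → i < m + 1 → qbin ζ (m + 1) i = 0 := by
    intro i h1 h2
    have key := qbin_mul_qfac ζ (m + 1) i (le_of_lt h2)
    rw [hqfacp] at key
    have hne : qfac ζ i * qfac ζ (m + 1 - i) ≠ 0 :=
      mul_ne_zero (hqfac_ne i h2) (hqfac_ne (m + 1 - i) (by omega))
    exact (mul_eq_zero.mp key).resolve_right hne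
  rw [qbinomial_expansion ζ u v huv' (m + 1), Finset.sum_range_succ,
    Finset.sum_range_succ']
  have h0 : ∀ i ∈ Finset.range m,
      algebraMap k R (qbin ζ (m + 1) (i + 1)) * (u ^ (i + 1) * v ^ (m + 1 - (i + 1))) = 0 := by
    intro i hi
    rw [Finset.mem_range] at hi
    rw [hmid (i + 1) (by omega) (by omega)]
    simp
  rw [Finset.sum_eq_zero h0, qbin_self, qbin_zero]
  simp [add_comm]
end

section
/- Let N ≥ 1 and let k be a field containing a primitive N-th root of unity q (so N is invertible in k). In the group Hopf algebra k[ℤ/N], let K denote the group-like basis element corresponding to the generator 1 of ℤ/N, and set R = N^{−1}·Σ_{i,j=0}^{N−1} q^{−ij}·(K^i ⊗ K^j) in k[ℤ/N] ⊗_k k[ℤ/N]. Then: (a) R is invertible with inverse N^{−1}·Σ_{i,j=0}^{N−1} q^{ij}·(K^i ⊗ K^j); (b) (Δ ⊗ id)(R) = R₁₃·R₂₃ and (id ⊗ Δ)(R) = R₁₃·R₁₂ in the triple tensor product k[ℤ/N]^{⊗3}. Here Δ is the comultiplication of the group Hopf algebra (Δ(K^i) = K^i ⊗ K^i), and R₁₂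 = N^{−1}Σ q^{−ij} K^i ⊗ K^j ⊗ 1, R₁₃ = N^{−1}Σ q^{−ij} K^i ⊗ 1 ⊗ K^j, R₂₃ = N^{−1}Σ q^{−ij} 1 ⊗ K^i ⊗ K^j. Hence R is a universal R-matrix making k[ℤ/N] quasi-triangular. -/
/-!
Put `e a = |R|⁻¹ ∑_z ψ(a z) K^z`, where `ψ` is a primitive additive character of a finite
commutative ring `R` (for `R = ℤ/N`, `ψ z = q^{-z}`). Orthogonality of characters makes the `e a`
a complete family of orthogonal idempotents, with `K^z e b = ψ(-b z) e b`, and rewrites the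
R-matrix as `R = ∑_a K^a ⊗ e a = ∑_a e a ⊗ K^a`. In this form every identity collapses to a
single sum: `R R' = ∑_a K^a K^{-a} ⊗ e a = 1`, `(Δ ⊗ id) R = ∑_a (K^a ⊗ K^a) ⊗ e a = R₁₃ R₂₃`,
and `(id ⊗ Δ) R = ∑_a e a ⊗ (K^a ⊗ K^a) = R₁₃ R₁₂`.
-/

open TensorProduct Finset

noncomputable section

/-- The group algebra `k[ℤ/N]`. -/
abbrev GA (k : Type*) [Field k] (N : ℕ) := MonoidAlgebra k (Multiplicative (ZMod N))

/-- The group-like basis element `K` corresponding to the generator `1` of `ℤ/N`. -/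
def Kgen (k : Type*) [Field k] (N : ℕ) : GA k N :=
  MonoidAlgebra.of k (Multiplicative (ZMod N)) (Multiplicative.ofAdd (1 : ZMod N))

/-- The candidate universal R-matrix `R = N⁻¹ ∑_{i,j} q^{−ij} K^i ⊗ K^j`. -/
def Rmat (k : Type*) [Field k] (N : ℕ) (q : k) : GA k N ⊗[k] GA k N :=
  (N : k)⁻¹ • ∑ i ∈ range N, ∑ j ∈ range N,
    q⁻¹ ^ (i * j) • ((Kgen k N ^ i) ⊗ₜ[k] (Kgen k N ^ j))

section OrthogonalIdempotents

variable {k ι A B : Type*} [CommSemiring k] [Semiring A] [Algebra k A] [Semiring B] [Algebra k B]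
  [Fintype ι] {e : ι → B}

lemma OrthogonalIdempotents.sum_tmul_mul_sum_tmul_right (he : OrthogonalIdempotents e)
    (x y : ι → A) :
    (∑ i, x i ⊗ₜ[k] e i) * (∑ i, y i ⊗ₜ[k] e i) = ∑ i, (x i * y i) ⊗ₜ[k] e i := by
  classical
  simp only [Finset.sum_mul_sum, Algebra.TensorProduct.tmul_mul_tmul, he.mul_eq, tmul_ite,
    Finset.sum_ite_eq, Finset.mem_univ, if_true]

lemma OrthogonalIdempotents.sum_tmul_mul_sum_tmul_left (he : OrthogonalIdempotents e)
    (x y : ι → A) :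
    (∑ i, e i ⊗ₜ[k] x i) * (∑ i, e i ⊗ₜ[k] y i) = ∑ i, e i ⊗ₜ[k] (x i * y i) := by
  classical
  simp only [Finset.sum_mul_sum, Algebra.TensorProduct.tmul_mul_tmul, he.mul_eq, ite_tmul,
    Finset.sum_ite_eq, Finset.mem_univ, if_true]

end OrthogonalIdempotents

section IsLinearMap

variable {k M N : Type*} [CommSemiring k] [AddCommMonoid M] [Module k M] [AddCommMonoid N]
  [Module k N]

lemma TensorProduct.isLinearMap_tmul_left (m : M) : IsLinearMap k (fun n : N => m ⊗ₜ[k] n) :=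
  (TensorProduct.mk k M N m).isLinear

lemma TensorProduct.isLinearMap_tmul_right (n : N) : IsLinearMap k (fun m : M => m ⊗ₜ[k] n) :=
  ((TensorProduct.mk k M N).flip n).isLinear

end IsLinearMap

namespace GroupAlgebraRMatrix

section FiniteRing

variable {k R : Type*} [Field k] [CommRing R]

variable (k) in
def K (a : R) : MonoidAlgebra k (Multiplicative R) :=
  MonoidAlgebra.of k (Multiplicative R) (Multiplicative.ofAdd a)

lemma K_add (a b : R) : K k (a + b) = K k a * K k b := by
  rw [K, K, K, ofAdd_add, map_mul]

lemma K_zero : K k (0 : R) = 1 := by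
  rw [K, ofAdd_zero, map_one]

variable [Fintype R] (ψ : AddChar R k)

def fourierIdem (a : R) : MonoidAlgebra k (Multiplicative R) :=
  (Fintype.card R : k)⁻¹ • ∑ z, ψ (a * z) • K k z

lemma K_mul_fourierIdem (z b : R) :
    K k z * fourierIdem ψ b = ψ (-(b * z)) • fourierIdem ψ b := by
  conv_rhs => rw [fourierIdem, ← Equiv.sum_comp (Equiv.addLeft z)]
  simp only [fourierIdem, mul_smul_comm, Finset.mul_sum, ← K_add, Finset.smul_sum, smul_smul,
    Equiv.coe_addLeft]
  refine Finset.sum_congr rfl fun w _ => ?_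
  rw [mul_left_comm, ← AddChar.map_add_eq_mul]
  ring_nf

variable {ψ}

lemma fourierIdem_mul_fourierIdem [DecidableEq R] (hψ : ψ.IsPrimitive)
    (hcard : (Fintype.card R : k) ≠ 0) (a b : R) :
    fourierIdem ψ a * fourierIdem ψ b = if a = b then fourierIdem ψ a else 0 := by
  have hsum : ∑ z, ψ (a * z) * ψ (-(b * z)) = if a = b then (Fintype.card R : k) else 0 := by
    simp_rw [← AddChar.map_add_eq_mul, ← sub_eq_add_neg, ← sub_mul, mul_comm (a - b)]
    simp [AddChar.sum_mulShift _ hψ, sub_eq_zero]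
  conv_lhs => rw [fourierIdem, smul_mul_assoc, Finset.sum_mul]
  simp_rw [smul_mul_assoc, K_mul_fourierIdem, smul_smul, ← Finset.sum_smul, hsum]
  split_ifs with hab
  · rw [hab, smul_smul, inv_mul_cancel₀ hcard, one_smul]
  · rw [zero_smul, smul_zero]

lemma sum_fourierIdem (hψ : ψ.IsPrimitive) (hcard : (Fintype.card R : k) ≠ 0) :
    ∑ a, fourierIdem ψ a = 1 := by
  classical
  simp only [fourierIdem]
  rw [← Finset.smul_sum, Finset.sum_comm]
  simp only [← Finset.sum_smul, AddChar.sum_mulShift _ hψ, Nat.cast_ite, Nat.cast_zero, ite_smul,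
    zero_smul, Finset.sum_ite_eq', Finset.mem_univ, if_true]
  rw [K_zero, smul_smul, inv_mul_cancel₀ hcard, one_smul]

theorem completeOrthogonalIdempotents_fourierIdem (hψ : ψ.IsPrimitive)
    (hcard : (Fintype.card R : k) ≠ 0) :
    CompleteOrthogonalIdempotents (fourierIdem ψ) := by
  classical
  exact ⟨OrthogonalIdempotents.iff_mul_eq.mpr (fourierIdem_mul_fourierIdem hψ hcard),
    sum_fourierIdem hψ hcard⟩

lemma fourierIdem_inv (a : R) : fourierIdem ψ⁻¹ a = fourierIdem ψ (-a) := by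
  simp only [fourierIdem, AddChar.inv_apply, neg_mul]

variable (ψ) in
/-- `rMatrix ψ (· ⊗ₜ ·)` is the R-matrix; other choices of `f` place its legs, e.g.
`fun x y ↦ (x ⊗ₜ 1) ⊗ₜ y` gives `R₁₃`. -/
def rMatrix {M : Type*} [AddCommMonoid M] [Module k M]
    (f : MonoidAlgebra k (Multiplicative R) → MonoidAlgebra k (Multiplicative R) → M) : M :=
  (Fintype.card R : k)⁻¹ • ∑ a, ∑ z, ψ (a * z) • f (K k a) (K k z)

section rMatrix

variable {M : Type*} [AddCommMonoid M] [Module k M]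
  {f : MonoidAlgebra k (Multiplicative R) → MonoidAlgebra k (Multiplicative R) → M}

lemma apply_fourierIdem {g : MonoidAlgebra k (Multiplicative R) → M} (hg : IsLinearMap k g)
    (a : R) : g (fourierIdem ψ a) = (Fintype.card R : k)⁻¹ • ∑ z, ψ (a * z) • g (K k z) := by
  simp only [fourierIdem, hg.map_smul, ← IsLinearMap.mk'_apply hg, map_sum, map_smul]

lemma rMatrix_eq_sum_K_fourierIdem (hf : ∀ x, IsLinearMap k (f x)) :
    rMatrix ψ f = ∑ a, f (K k a) (fourierIdem ψ a) := by
  rw [rMatrix, Finset.smul_sum]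
  exact Finset.sum_congr rfl fun a _ => (apply_fourierIdem (hf _) a).symm

lemma rMatrix_eq_sum_fourierIdem_K (hf : ∀ y, IsLinearMap k (f · y)) :
    rMatrix ψ f = ∑ a, f (fourierIdem ψ a) (K k a) := by
  rw [rMatrix, Finset.sum_comm, Finset.smul_sum]
  refine Finset.sum_congr rfl fun a _ => ?_
  simp_rw [mul_comm _ a]
  exact (apply_fourierIdem (hf _) a).symm

end rMatrix

open Algebra.TensorProduct (map)

theorem rMatrix_mul_rMatrix_inv (hψ : ψ.IsPrimitive) (hcard : (Fintype.card R : k) ≠ 0) :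
    rMatrix ψ (· ⊗ₜ[k] ·) * rMatrix ψ⁻¹ (· ⊗ₜ[k] ·) = 1 := by
  have he := completeOrthogonalIdempotents_fourierIdem hψ hcard
  have hinv : rMatrix ψ⁻¹ (· ⊗ₜ[k] ·) = ∑ a, K k (-a) ⊗ₜ[k] fourierIdem ψ a := by
    rw [rMatrix_eq_sum_K_fourierIdem TensorProduct.isLinearMap_tmul_left,
      ← Equiv.sum_comp (Equiv.neg R)]
    simp only [Equiv.neg_apply, fourierIdem_inv, neg_neg]
  rw [rMatrix_eq_sum_K_fourierIdem TensorProduct.isLinearMap_tmul_left, hinv,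
    he.sum_tmul_mul_sum_tmul_right]
  simp only [← K_add, add_neg_cancel, K_zero, ← tmul_sum, he.complete,
    Algebra.TensorProduct.one_def]

theorem map_comul_id_rMatrix (hψ : ψ.IsPrimitive) (hcard : (Fintype.card R : k) ≠ 0)
    (Δ : MonoidAlgebra k (Multiplicative R) →ₐ[k]
      MonoidAlgebra k (Multiplicative R) ⊗[k] MonoidAlgebra k (Multiplicative R))
    (hΔ : ∀ a, Δ (K k a) = K k a ⊗ₜ[k] K k a) :
    map Δ (AlgHom.id k _) (rMatrix ψ (· ⊗ₜ[k] ·)) =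
      rMatrix ψ (fun x y => (x ⊗ₜ[k] 1) ⊗ₜ[k] y) * rMatrix ψ (fun x y => (1 ⊗ₜ[k] x) ⊗ₜ[k] y) := by
  simp only [rMatrix_eq_sum_K_fourierIdem fun _ => TensorProduct.isLinearMap_tmul_left _,
    (completeOrthogonalIdempotents_fourierIdem hψ hcard).sum_tmul_mul_sum_tmul_right, map_sum,
    Algebra.TensorProduct.map_tmul, hΔ, AlgHom.id_apply, Algebra.TensorProduct.tmul_mul_tmul,
    mul_one, one_mul]

theorem map_id_comul_rMatrix (hψ : ψ.IsPrimitive) (hcard : (Fintype.card R : k) ≠ 0)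
    (Δ : MonoidAlgebra k (Multiplicative R) →ₐ[k]
      MonoidAlgebra k (Multiplicative R) ⊗[k] MonoidAlgebra k (Multiplicative R))
    (hΔ : ∀ a, Δ (K k a) = K k a ⊗ₜ[k] K k a) :
    map (AlgHom.id k _) Δ (rMatrix ψ (· ⊗ₜ[k] ·)) =
      rMatrix ψ (fun x y => x ⊗ₜ[k] (1 ⊗ₜ[k] y)) * rMatrix ψ (fun x y => x ⊗ₜ[k] (y ⊗ₜ[k] 1)) := by
  simp only [rMatrix_eq_sum_fourierIdem_K fun _ => TensorProduct.isLinearMap_tmul_right _,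
    (completeOrthogonalIdempotents_fourierIdem hψ hcard).sum_tmul_mul_sum_tmul_left, map_sum,
    Algebra.TensorProduct.map_tmul, hΔ, AlgHom.id_apply, Algebra.TensorProduct.tmul_mul_tmul,
    mul_one, one_mul]

end FiniteRing

section ZMod

variable {k : Type*} [Field k] {N : ℕ}

lemma Kgen_pow (i : ℕ) : Kgen k N ^ i = K k (i : ZMod N) := by
  rw [Kgen, K, ← map_pow, ← ofAdd_nsmul, nsmul_one]

lemma sum_range_eq_sum_zmod [NeZero N] {M : Type*} [AddCommMonoid M] (g : ZMod N → M) :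
    ∑ i ∈ range N, g i = ∑ z, g z :=
  Finset.sum_nbij' (↑) ZMod.val (fun _ _ => mem_univ _) (fun z _ => mem_range.mpr z.val_lt)
    (fun _ hi => ZMod.val_cast_of_lt (mem_range.mp hi)) (fun z _ => ZMod.natCast_zmod_val z)
    fun _ _ => rfl

variable (N) in
def rMatrixOfRoot {M : Type*} [AddCommMonoid M] [Module k M] (ζ : k)
    (f : GA k N → GA k N → M) : M :=
  (N : k)⁻¹ • ∑ i ∈ range N, ∑ j ∈ range N, ζ ^ (i * j) • f (Kgen k N ^ i) (Kgen k N ^ j)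

lemma rMatrixOfRoot_eq_rMatrix [NeZero N] {M : Type*} [AddCommMonoid M] [Module k M] {ζ : k}
    {ψ : AddChar (ZMod N) k} (hψ : ∀ n : ℕ, ψ n = ζ ^ n) (f : GA k N → GA k N → M) :
    rMatrixOfRoot N ζ f = rMatrix ψ f := by
  simp only [rMatrixOfRoot, rMatrix, ZMod.card, ← sum_range_eq_sum_zmod, Kgen_pow, ← Nat.cast_mul,
    hψ]

end ZMod

end GroupAlgebraRMatrix

open GroupAlgebraRMatrix in
/-- for a primitive `N`-th root of unity `q`,
`R = N⁻¹ ∑ q^{−ij} K^i ⊗ K^j` is invertible with inverse `N⁻¹ ∑ q^{ij} K^i ⊗ K^j`, and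
satisfies `(Δ ⊗ id)(R) = R₁₃ R₂₃` and `(id ⊗ Δ)(R) = R₁₃ R₁₂`, where `Δ` is the
comultiplication of the group Hopf algebra `k[ℤ/N]` (so `Δ(K^i) = K^i ⊗ K^i`); hence `R`
is a universal R-matrix making `k[ℤ/N]` quasi-triangular. -/
theorem groupAlgebra_R_matrix
    (N : ℕ) (hN : 1 ≤ N) (k : Type*) [Field k] (q : k)
    (hq1 : q ^ N = 1) (hq2 : ∀ j : ℕ, 1 ≤ j → j < N → q ^ j ≠ 1)
    (Δ : GA k N →ₐ[k] GA k N ⊗[k] GA k N)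
    (hΔ : ∀ g : Multiplicative (ZMod N),
      Δ (MonoidAlgebra.of k (Multiplicative (ZMod N)) g)
        = (MonoidAlgebra.of k (Multiplicative (ZMod N)) g)
            ⊗ₜ[k] (MonoidAlgebra.of k (Multiplicative (ZMod N)) g)) :
    (Rmat k N q * ((N : k)⁻¹ • ∑ i ∈ range N, ∑ j ∈ range N,
        q ^ (i * j) • ((Kgen k N ^ i) ⊗ₜ[k] (Kgen k N ^ j))) = 1 ∧
     ((N : k)⁻¹ • ∑ i ∈ range N, ∑ j ∈ range N,
        q ^ (i * j) • ((Kgen k N ^ i) ⊗ₜ[k] (Kgen k N ^ j))) * Rmat k N q = 1) ∧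
    (Algebra.TensorProduct.map Δ (AlgHom.id k (GA k N)) (Rmat k N q)
        = ((N : k)⁻¹ • ∑ i ∈ range N, ∑ j ∈ range N,
            q⁻¹ ^ (i * j) • (((Kgen k N ^ i) ⊗ₜ[k] (1 : GA k N)) ⊗ₜ[k] (Kgen k N ^ j)))
          * ((N : k)⁻¹ • ∑ i ∈ range N, ∑ j ∈ range N,
            q⁻¹ ^ (i * j) • (((1 : GA k N) ⊗ₜ[k] (Kgen k N ^ i)) ⊗ₜ[k] (Kgen k N ^ j)))) ∧
    (Algebra.TensorProduct.map (AlgHom.id k (GA k N)) Δ (Rmat k N q)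
        = ((N : k)⁻¹ • ∑ i ∈ range N, ∑ j ∈ range N,
            q⁻¹ ^ (i * j) • ((Kgen k N ^ i) ⊗ₜ[k] ((1 : GA k N) ⊗ₜ[k] (Kgen k N ^ j))))
          * ((N : k)⁻¹ • ∑ i ∈ range N, ∑ j ∈ range N,
            q⁻¹ ^ (i * j) • ((Kgen k N ^ i) ⊗ₜ[k] ((Kgen k N ^ j) ⊗ₜ[k] (1 : GA k N))))) := by
  have : NeZero N := ⟨by omega⟩
  have hq : IsPrimitiveRoot q⁻¹ N := (IsPrimitiveRoot.mk_of_lt q hN hq1 hq2).inv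
  set ψ := AddChar.zmodChar N hq.pow_eq_one
  have hψ : ψ.IsPrimitive := AddChar.zmodChar_primitive_of_primitive_root N hq
  have hcard : (Fintype.card (ZMod N) : k) ≠ 0 := by rw [ZMod.card]; exact hq.neZero'.out
  have hψ_apply : ∀ n : ℕ, ψ n = q⁻¹ ^ n := AddChar.zmodChar_apply' _
  have hψinv_apply : ∀ n : ℕ, ψ⁻¹ n = q ^ n := fun n => by
    rw [AddChar.inv_apply', hψ_apply, inv_pow, inv_inv]
  have hΔK : ∀ a, Δ (K k a) = K k a ⊗ₜ[k] K k a := fun a => hΔ _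
  have hinv : rMatrixOfRoot N q⁻¹ (· ⊗ₜ[k] ·) * rMatrixOfRoot N q (· ⊗ₜ[k] ·) = 1 := by
    rw [rMatrixOfRoot_eq_rMatrix hψ_apply, rMatrixOfRoot_eq_rMatrix hψinv_apply]
    exact rMatrix_mul_rMatrix_inv hψ hcard
  have hleft : Algebra.TensorProduct.map Δ (AlgHom.id k _) (rMatrixOfRoot N q⁻¹ (· ⊗ₜ[k] ·))
      = rMatrixOfRoot N q⁻¹ (fun x y => (x ⊗ₜ[k] (1 : GA k N)) ⊗ₜ[k] y)
        * rMatrixOfRoot N q⁻¹ (fun x y => ((1 : GA k N) ⊗ₜ[k] x) ⊗ₜ[k] y) := by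
    simp only [rMatrixOfRoot_eq_rMatrix hψ_apply]
    exact map_comul_id_rMatrix hψ hcard Δ hΔK
  have hright : Algebra.TensorProduct.map (AlgHom.id k _) Δ (rMatrixOfRoot N q⁻¹ (· ⊗ₜ[k] ·))
      = rMatrixOfRoot N q⁻¹ (fun x y => x ⊗ₜ[k] ((1 : GA k N) ⊗ₜ[k] y))
        * rMatrixOfRoot N q⁻¹ (fun x y => x ⊗ₜ[k] (y ⊗ₜ[k] (1 : GA k N))) := by
    simp only [rMatrixOfRoot_eq_rMatrix hψ_apply]
    exact map_id_comul_rMatrix hψ hcard Δ hΔK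
  -- `Rmat k N q` and the sums in the goal unfold from `rMatrixOfRoot N q⁻¹ f`, `rMatrixOfRoot N q f`.
  exact ⟨⟨hinv, (mul_comm _ _).trans hinv⟩, hleft, hright⟩
end
end

section
/- There exists a Hopf algebra structure over k on the algebra B (extending its given k-algebra structure) whose comultiplication Δ, counit ε, and antipode S satisfy, on the generators: Δ(K) = K ⊗ K and Δ(d_k) = d_k ⊗ 1 + K^{n_k} ⊗ d_k for all 1 ≤ k ≤ t; ε(K) = 1 and ε(d_k) = 0 for all k; S(K) = K^{N−1} and S(d_k) = −K^{N−n_k}·d_k for all k. -/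
/-!
`B` is given by generators and relations, so `Δ`, `ε` and `S` are defined on `K` and the `d i`
(`S` as an algebra map into `Bᵐᵒᵖ`) once their values satisfy the relations. With
`n_i = n / p_i`, the one relation with content is `Δ(d i) ^ p i = 0`: the summands `d i ⊗ 1` and
`K ^ n_i ⊗ d i` commute up to `ω = ξ_i ^ n_i = q ^ (n_i ^ 2)`, a primitive `p_i`-th root of unity
because `N ∣ n_i ^ 2 l ↔ p_i ∣ l`, so the `ω`-binomial theorem leaves only
`(d i ⊗ 1) ^ p i + (K ^ n_i ⊗ d i) ^ p i = 0`. The relations `d i d j = d j d i` are respected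
because `N ∣ n_i n_j` for `i ≠ j`, which makes `K ^ n_i` commute with `d j`. Coassociativity and
the counit laws are identities between algebra maps, checked on generators; the antipode laws hold
on generators and pass to products since `S` reverses them.
-/

/-- The defining relations of the bosonization `B = H_n ⋊ k[C_N]`: generators
`K = ι none` and `d_i = ι (some i)`, relations `K^N = 1`, `K d_i = ξ_i d_i K`,
`d_i ^ (p i) = 0` and `d_i d_j = d_j d_i`. -/
inductive BosRel (k : Type*) [Field k] (t N : ℕ) (p : Fin t → ℕ) (ξ : Fin t → k) :
    FreeAlgebra k (Option (Fin t)) → FreeAlgebra k (Option (Fin t)) → Prop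
  | K_pow : BosRel k t N p ξ (FreeAlgebra.ι k (none : Option (Fin t)) ^ N) 1
  | K_d (i : Fin t) : BosRel k t N p ξ
      (FreeAlgebra.ι k (none : Option (Fin t)) * FreeAlgebra.ι k (some i))
      (ξ i • (FreeAlgebra.ι k (some i) * FreeAlgebra.ι k (none : Option (Fin t))))
  | d_pow (i : Fin t) : BosRel k t N p ξ (FreeAlgebra.ι k (some i) ^ p i) 0
  | d_comm (i j : Fin t) : i ≠ j → BosRel k t N p ξ
      (FreeAlgebra.ι k (some i) * FreeAlgebra.ι k (some j))
      (FreeAlgebra.ι k (some j) * FreeAlgebra.ι k (some i))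

/-- The bosonization `B`, as the quotient of the free algebra on `K, d_1, …, d_t` by the
two-sided ideal generated by the relations `BosRel`. -/
abbrev BosAlg (k : Type*) [Field k] (t N : ℕ) (p : Fin t → ℕ) (ξ : Fin t → k) :=
  RingQuot (BosRel k t N p ξ)

/-- The class of the generator `K` in `B`. -/
noncomputable def KB (k : Type*) [Field k] (t N : ℕ) (p : Fin t → ℕ) (ξ : Fin t → k) :
    BosAlg k t N p ξ :=
  RingQuot.mkAlgHom k (BosRel k t N p ξ) (FreeAlgebra.ι k none)

/-- The class of the generator `d i` in `B`. -/
noncomputable def dB (k : Type*) [Field k] (t N : ℕ) (p : Fin t → ℕ) (ξ : Fin t → k)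
    (i : Fin t) : BosAlg k t N p ξ :=
  RingQuot.mkAlgHom k (BosRel k t N p ξ) (FreeAlgebra.ι k (some i))

open TensorProduct

open Finset

section QBinomial

variable {R : Type*} [CommSemiring R]

/-- Gaussian binomial coefficients, via the Pascal rule obtained by expanding
`(x + y) * (x + y) ^ n` when `y * x = ω • (x * y)`. -/
def qBinom (ω : R) : ℕ → ℕ → R
  | _, 0 => 1
  | 0, _ + 1 => 0
  | n + 1, j + 1 => qBinom ω n j + ω ^ (j + 1) * qBinom ω n (j + 1)

def qNat (ω : R) (n : ℕ) : R := ∑ i ∈ range n, ω ^ i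

def qFactorial (ω : R) (n : ℕ) : R := ∏ i ∈ range n, qNat ω (i + 1)

@[simp] theorem qBinom_zero_right (ω : R) (n : ℕ) : qBinom ω n 0 = 1 := by cases n <;> rfl

theorem qBinom_succ_succ (ω : R) (n j : ℕ) :
    qBinom ω (n + 1) (j + 1) = qBinom ω n j + ω ^ (j + 1) * qBinom ω n (j + 1) := rfl

theorem qBinom_eq_zero_of_lt (ω : R) {n j : ℕ} (h : n < j) : qBinom ω n j = 0 := by
  induction n generalizing j with
  | zero => obtain ⟨j, rfl⟩ := Nat.exists_eq_add_of_lt h; rfl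
  | succ n ih =>
    obtain ⟨j, rfl⟩ : ∃ j', j = j' + 1 := ⟨j - 1, by omega⟩
    rw [qBinom_succ_succ, ih (by omega), ih (by omega), mul_zero, add_zero]

theorem qNat_add (ω : R) (a b : ℕ) : qNat ω (a + b) = qNat ω a + ω ^ a * qNat ω b := by
  simp only [qNat, sum_range_add, pow_add, mul_sum]

theorem qFactorial_succ (ω : R) (n : ℕ) : qFactorial ω (n + 1) = qFactorial ω n * qNat ω (n + 1) :=
  prod_range_succ _ _

end QBinomial

section QBinomialRing

variable {R : Type*} [CommRing R]

theorem qBinom_mul_qFactorial (ω : R) {n j : ℕ} (h : j ≤ n) :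
    qBinom ω n j * qFactorial ω j * qFactorial ω (n - j) = qFactorial ω n := by
  induction n generalizing j with
  | zero => obtain rfl := Nat.le_zero.1 h; simp [qFactorial]
  | succ n ih =>
    cases j with
    | zero => simp [qFactorial]
    | succ j =>
      have hsplit : qNat ω (n + 1) = qNat ω (j + 1) + ω ^ (j + 1) * qNat ω (n - j) := by
        rw [← qNat_add]; congr 1; omega
      have hright : qBinom ω n (j + 1) * qFactorial ω (j + 1) * qFactorial ω (n - j)
          = qNat ω (n - j) * qFactorial ω n := by
        rcases Nat.lt_or_ge j n with hj | hj
        · obtain ⟨r, hr⟩ : ∃ r, n - j = r + 1 := ⟨n - j - 1, by omega⟩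
          rw [hr, qFactorial_succ ω r, ← ih (show j + 1 ≤ n by omega),
            show n - (j + 1) = r by omega]
          ring
        · rw [qBinom_eq_zero_of_lt ω (by omega), show n - j = 0 by omega]
          simp [qNat]
      rw [qBinom_succ_succ, Nat.add_sub_add_right, qFactorial_succ ω n, hsplit]
      linear_combination qNat ω (j + 1) * ih (show j ≤ n by omega) + ω ^ (j + 1) * hright
        + qBinom ω n j * qFactorial ω (n - j) * qFactorial_succ ω j

variable {ω : R} {P : ℕ}

theorem qNat_ne_zero (hω : IsPrimitiveRoot ω P) {s : ℕ} (hs : s ≠ 0) (hsP : s < P) :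
    qNat ω s ≠ 0 := by
  intro h
  have := geom_sum_mul ω s
  rw [qNat] at h
  rw [h, zero_mul, eq_comm, sub_eq_zero] at this
  exact hω.pow_ne_one_of_pos_of_lt hs hsP this

variable [IsDomain R]

theorem qFactorial_ne_zero (hω : IsPrimitiveRoot ω P) {s : ℕ} (hsP : s < P) :
    qFactorial ω s ≠ 0 :=
  prod_ne_zero_iff.2 fun i hi => qNat_ne_zero hω i.succ_ne_zero (by have := mem_range.1 hi; omega)

theorem qBinom_eq_zero (hω : IsPrimitiveRoot ω P) {j : ℕ} (hj : j ≠ 0) (hjP : j < P) :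
    qBinom ω P j = 0 := by
  obtain ⟨r, rfl⟩ : ∃ r, P = r + 1 := ⟨P - 1, by omega⟩
  have h := qBinom_mul_qFactorial ω hjP.le
  rw [qFactorial_succ, qNat, hω.geom_sum_eq_zero (by omega), mul_zero] at h
  simpa [qFactorial_ne_zero hω hjP, qFactorial_ne_zero hω (show r + 1 - j < r + 1 by omega)]
    using h

end QBinomialRing

section QCommuting

variable {k A : Type*} [CommSemiring k] [Semiring A] [Algebra k A] {ω : k} {x y : A}

theorem mul_pow_eq_smul_pow_mul (h : y * x = ω • (x * y)) (r : ℕ) :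
    y * x ^ r = ω ^ r • (x ^ r * y) := by
  induction r with
  | zero => simp
  | succ r ih =>
    rw [pow_succ, ← mul_assoc, ih, smul_mul_assoc, mul_assoc, h, mul_smul_comm, smul_smul,
      ← mul_assoc, pow_succ]

theorem pow_mul_eq_smul_mul_pow (h : y * x = ω • (x * y)) (s : ℕ) :
    y ^ s * x = ω ^ s • (x * y ^ s) := by
  induction s with
  | zero => simp
  | succ s ih =>
    rw [pow_succ', mul_assoc, ih, mul_smul_comm, ← mul_assoc, h, smul_mul_assoc, smul_smul,
      mul_assoc, ← pow_succ]

theorem mul_pow_eq_zero_of_pow_eq_zero (h : y * x = ω • (x * y)) {n : ℕ} (hx : x ^ n = 0) :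
    (x * y) ^ n = 0 := by
  suffices ∀ s, ∃ c : k, (x * y) ^ s = c • (x ^ s * y ^ s) by
    obtain ⟨c, hc⟩ := this n
    rw [hc, hx, zero_mul, smul_zero]
  intro s
  induction s with
  | zero => exact ⟨1, by simp⟩
  | succ s ih =>
    obtain ⟨c, hc⟩ := ih
    refine ⟨c * ω ^ s, ?_⟩
    rw [pow_succ, hc, smul_mul_assoc, mul_assoc, ← mul_assoc (y ^ s), pow_mul_eq_smul_mul_pow h,
      smul_mul_assoc, mul_smul_comm, smul_smul]
    simp only [pow_succ, mul_assoc]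

theorem add_pow_eq_sum_qBinom (h : y * x = ω • (x * y)) (n : ℕ) :
    (x + y) ^ n = ∑ j ∈ range (n + 1), qBinom ω n j • (x ^ j * y ^ (n - j)) := by
  induction n with
  | zero => simp
  | succ n ih =>
    set f : ℕ → A := fun j => (ω ^ j * qBinom ω n j) • (x ^ j * y ^ (n + 1 - j))
    have hf_shift :
        ∑ j ∈ range (n + 1), f j = y ^ (n + 1) + ∑ j ∈ range (n + 1), f (j + 1) := by
      have := sum_range_succ f (n + 1)
      rw [sum_range_succ', show f (n + 1) = 0 by simp [f, qBinom_eq_zero_of_lt], add_zero] at this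
      simp [← this, f, add_comm]
    calc (x + y) ^ (n + 1)
        = ∑ j ∈ range (n + 1), (qBinom ω n j • (x ^ (j + 1) * y ^ (n - j)) + f j) := by
          rw [pow_succ', ih, mul_sum]
          refine sum_congr rfl fun j hj => ?_
          have hj : n - j + 1 = n + 1 - j := by have := mem_range.1 hj; omega
          rw [mul_smul_comm, add_mul, ← mul_assoc, ← pow_succ', ← mul_assoc,
            mul_pow_eq_smul_pow_mul h, smul_mul_assoc, mul_assoc, ← pow_succ', smul_add,
            smul_smul, mul_comm (qBinom ω n j), hj]
      _ = _ := by
          rw [sum_add_distrib, hf_shift, sum_range_succ' _ (n + 1)]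
          simp only [Nat.add_sub_add_right, qBinom_succ_succ, add_smul, sum_add_distrib,
            qBinom_zero_right, pow_zero, Nat.sub_zero, one_mul, one_smul, f]
          abel

end QCommuting

theorem add_pow_eq_zero_of_isPrimitiveRoot {k A : Type*} [CommRing k] [IsDomain k] [Semiring A]
    [Algebra k A] {ω : k} {x y : A} (h : y * x = ω • (x * y)) {P : ℕ}
    (hω : IsPrimitiveRoot ω P) (hx : x ^ P = 0) (hy : y ^ P = 0) : (x + y) ^ P = 0 := by
  rw [add_pow_eq_sum_qBinom h]
  refine sum_eq_zero fun j hj => ?_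
  rcases eq_or_ne j 0 with rfl | hj0
  · simp [hy]
  rcases (mem_range_succ_iff.1 hj).eq_or_lt with rfl | hjP
  · simp [hx]
  · rw [qBinom_eq_zero hω hj0 hjP, zero_smul]

section AntipodeIdentity

variable {k A : Type*} [CommSemiring k] [Semiring A] [Algebra k A] {S : A →ₗ[k] A}

open TensorProduct LinearMap

theorem mul'_map_id_mul_tmul (hS : ∀ a b, S (a * b) = S b * S a) (u : A ⊗[k] A) (c d : A) :
    mul' k A (map S id (u * c ⊗ₜ d)) = S c * mul' k A (map S id u) * d := by
  induction u using TensorProduct.induction_on with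
  | zero => simp
  | tmul a b => simp [hS, mul_assoc]
  | add u v hu hv => simp only [add_mul, map_add, hu, hv, mul_add]

theorem mul'_id_map_tmul_mul (hS : ∀ a b, S (a * b) = S b * S a) (u : A ⊗[k] A) (c d : A) :
    mul' k A (map id S (c ⊗ₜ d * u)) = c * mul' k A (map id S u) * S d := by
  induction u using TensorProduct.induction_on with
  | zero => simp
  | tmul a b => simp [hS, mul_assoc]
  | add u v hu hv => simp only [mul_add, map_add, hu, hv, add_mul]

theorem mul'_map_id_mul_of_eq_algebraMap (hS : ∀ a b, S (a * b) = S b * S a) {u : A ⊗[k] A}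
    {r : k} (hu : mul' k A (map S id u) = algebraMap k A r) (v : A ⊗[k] A) :
    mul' k A (map S id (u * v)) = r • mul' k A (map S id v) := by
  induction v using TensorProduct.induction_on with
  | zero => simp
  | tmul c d => simp [mul'_map_id_mul_tmul hS, hu, Algebra.smul_def, Algebra.commutes, mul_assoc]
  | add v w hv hw => simp only [mul_add, map_add, hv, hw, smul_add]

theorem mul'_id_map_mul_of_eq_algebraMap (hS : ∀ a b, S (a * b) = S b * S a) {u : A ⊗[k] A}
    {r : k} (hu : mul' k A (map id S u) = algebraMap k A r) (v : A ⊗[k] A) :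
    mul' k A (map id S (v * u)) = r • mul' k A (map id S v) := by
  induction v using TensorProduct.induction_on with
  | zero => simp
  | tmul c d => simp [mul'_id_map_tmul_mul hS, hu, Algebra.smul_def, Algebra.commutes, mul_assoc]
  | add v w hv hw => simp only [add_mul, map_add, hv, hw, smul_add]

end AntipodeIdentity

namespace BosAlg

variable {k : Type*} [Field k] {t N : ℕ} {p : Fin t → ℕ} {ξ : Fin t → k}

local notation "𝔹" => BosAlg k t N p ξ
local notation "𝕂" => KB k t N p ξ
local notation "𝕕" => dB k t N p ξ

theorem KB_pow_N : 𝕂 ^ N = 1 := by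
  rw [KB, ← map_pow, RingQuot.mkAlgHom_rel k BosRel.K_pow, map_one]

theorem KB_mul_dB (i : Fin t) : 𝕂 * 𝕕 i = ξ i • (𝕕 i * 𝕂) := by
  rw [KB, dB, ← map_mul, RingQuot.mkAlgHom_rel k (BosRel.K_d i), map_smul, map_mul]

theorem dB_pow (i : Fin t) : 𝕕 i ^ p i = 0 := by
  rw [dB, ← map_pow, RingQuot.mkAlgHom_rel k (BosRel.d_pow i), map_zero]

theorem commute_dB {i j : Fin t} (h : i ≠ j) : Commute (𝕕 i) (𝕕 j) := by
  rw [Commute, SemiconjBy, dB, dB, ← map_mul, RingQuot.mkAlgHom_rel k (BosRel.d_comm i j h),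
    map_mul]

theorem KB_pow_mul_dB (a : ℕ) (i : Fin t) : 𝕂 ^ a * 𝕕 i = ξ i ^ a • (𝕕 i * 𝕂 ^ a) :=
  pow_mul_eq_smul_mul_pow (KB_mul_dB i) a

theorem dB_mul_KB_pow_pred (hN : 0 < N) {i : Fin t} (hξ : ξ i ^ N = 1) :
    𝕕 i * 𝕂 ^ (N - 1) = ξ i • (𝕂 ^ (N - 1) * 𝕕 i) := by
  rw [KB_pow_mul_dB, smul_smul, ← pow_succ', Nat.sub_add_cancel hN, hξ, one_smul]

theorem commute_KB_pow_dB {a : ℕ} {i : Fin t} (h : ξ i ^ a = 1) : Commute (𝕂 ^ a) (𝕕 i) := by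
  rw [Commute, SemiconjBy, KB_pow_mul_dB, h, one_smul]

theorem KB_pow_mul_dB_pow (a : ℕ) (i : Fin t) : (𝕂 ^ a * 𝕕 i) ^ p i = 0 := by
  rw [KB_pow_mul_dB, smul_pow, mul_pow_eq_zero_of_pow_eq_zero (KB_pow_mul_dB a i) (dB_pow i),
    smul_zero]

theorem KB_pow_pred_pow {a : ℕ} (hN : 0 < N) (ha : a ≤ N) :
    (𝕂 ^ (N - 1)) ^ a = 𝕂 ^ (N - a) := by
  rw [← pow_mul]
  refine pow_eq_pow_of_modEq (Nat.ModEq.add_right_cancel' a ?_) KB_pow_N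
  rw [← add_one_mul, Nat.sub_one_add_one hN.ne', Nat.sub_add_cancel ha]
  exact (Nat.modEq_zero_iff_dvd.2 (dvd_mul_right N a)).trans
    (Nat.modEq_zero_iff_dvd.2 dvd_rfl).symm

theorem hom_ext {A : Type*} [Semiring A] [Algebra k A] {f g : 𝔹 →ₐ[k] A}
    (hK : f 𝕂 = g 𝕂) (hd : ∀ i, f (𝕕 i) = g (𝕕 i)) : f = g := by
  refine RingQuot.ringQuot_ext' _ _ _ (FreeAlgebra.hom_ext (funext fun o => ?_))
  cases o with
  | none => exact hK
  | some i => exact hd i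

@[elab_as_elim]
theorem induction {C : 𝔹 → Prop} (scalar : ∀ r, C (algebraMap k 𝔹 r)) (K : C 𝕂)
    (d : ∀ i, C (𝕕 i)) (add : ∀ x y, C x → C y → C (x + y))
    (mul : ∀ x y, C x → C y → C (x * y)) (x : 𝔹) : C x := by
  obtain ⟨x, rfl⟩ := RingQuot.mkAlgHom_surjective k (BosRel k t N p ξ) x
  induction x using FreeAlgebra.induction with
  | grade0 r => simpa only [AlgHom.commutes] using scalar r
  | grade1 o => cases o with
    | none => exact K
    | some i => exact d i
  | mul x y hx hy => simpa only [map_mul] using mul _ _ hx hy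
  | add x y hx hy => simpa only [map_add] using add _ _ hx hy

noncomputable def lift {A : Type*} [Semiring A] [Algebra k A] (κ : A) (δ : Fin t → A)
    (hκ : κ ^ N = 1) (hκδ : ∀ i, κ * δ i = ξ i • (δ i * κ)) (hδ : ∀ i, δ i ^ p i = 0)
    (hδδ : ∀ i j, i ≠ j → Commute (δ i) (δ j)) : 𝔹 →ₐ[k] A :=
  RingQuot.liftAlgHom k ⟨FreeAlgebra.lift k fun o => Option.elim o κ δ, fun x y h => by
    induction h with
    | K_pow => simpa using hκ
    | K_d i => simpa using hκδ i
    | d_pow i => simpa using hδ i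
    | d_comm i j hij => simpa using (hδδ i j hij).eq⟩

section Lift

variable {A : Type*} [Semiring A] [Algebra k A] {κ : A} {δ : Fin t → A} {hκ : κ ^ N = 1}
  {hκδ : ∀ i, κ * δ i = ξ i • (δ i * κ)} {hδ : ∀ i, δ i ^ p i = 0}
  {hδδ : ∀ i j, i ≠ j → Commute (δ i) (δ j)}

@[simp] theorem lift_KB : lift κ δ hκ hκδ hδ hδδ 𝕂 = κ := by
  rw [lift, KB, RingQuot.liftAlgHom_mkAlgHom_apply, FreeAlgebra.lift_ι_apply]
  rfl

@[simp] theorem lift_dB (i : Fin t) : lift κ δ hκ hκδ hδ hδδ (𝕕 i) = δ i := by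
  rw [lift, dB, RingQuot.liftAlgHom_mkAlgHom_apply, FreeAlgebra.lift_ι_apply]
  rfl

end Lift

/-- Conditions on `N`, `p`, `ξ` and the exponents `e` under which `Δ(d i) = d i ⊗ 1 + K ^ e i ⊗ d i`
defines a Hopf algebra structure on `B`; the theorem has `e i = n / p i`. -/
structure Admissible (N : ℕ) (p : Fin t → ℕ) (ξ : Fin t → k) (e : Fin t → ℕ) : Prop where
  N_pos : 0 < N
  le_N : ∀ i, e i ≤ N
  pow_N : ∀ i, ξ i ^ N = 1
  isPrimitiveRoot : ∀ i, IsPrimitiveRoot (ξ i ^ e i) (p i)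
  pow_eq_one_of_ne : ∀ i j, i ≠ j → ξ i ^ e j = 1

variable {e : Fin t → ℕ}

theorem Admissible.pow_sub_eq_one (h : Admissible N p ξ e) {i j : Fin t} (hij : i ≠ j) :
    ξ i ^ (N - e j) = 1 := by
  have := h.pow_N i
  rwa [← Nat.sub_add_cancel (h.le_N j), pow_add, h.pow_eq_one_of_ne i j hij, mul_one] at this

theorem Admissible.p_ne_zero (h : Admissible N p ξ e) (i : Fin t) : p i ≠ 0 := by
  refine ne_zero_of_dvd_ne_zero h.N_pos.ne' ((h.isPrimitiveRoot i).dvd_of_pow_eq_one N ?_)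
  rw [← pow_mul, mul_comm, pow_mul, h.pow_N, one_pow]

open Algebra.TensorProduct

noncomputable def comul (h : Admissible N p ξ e) : 𝔹 →ₐ[k] 𝔹 ⊗[k] 𝔹 :=
  lift (𝕂 ⊗ₜ 𝕂) (fun i => 𝕕 i ⊗ₜ 1 + (𝕂 ^ e i) ⊗ₜ 𝕕 i)
    (by rw [tmul_pow, KB_pow_N, one_def])
    (fun i => by
      simp only [mul_add, add_mul, tmul_mul_tmul, one_mul, mul_one, KB_mul_dB, smul_add,
        (Commute.self_pow 𝕂 (e i)).eq, smul_tmul', smul_tmul])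
    (fun i => by
      refine add_pow_eq_zero_of_isPrimitiveRoot ?_ (h.isPrimitiveRoot i) ?_ ?_
      · rw [tmul_mul_tmul, tmul_mul_tmul, KB_pow_mul_dB, one_mul, mul_one, smul_tmul']
      · rw [tmul_pow, dB_pow, zero_tmul]
      · rw [tmul_pow, dB_pow, tmul_zero])
    (fun i j hij => by
      refine .add_left (.add_right ?_ ?_) (.add_right ?_ ?_)
      · exact (commute_dB hij).tmul (.one_left _)
      · exact (commute_KB_pow_dB (h.pow_eq_one_of_ne i j hij)).symm.tmul (.one_left _)
      · exact (commute_KB_pow_dB (h.pow_eq_one_of_ne j i hij.symm)).tmul (.one_right _)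
      · exact (Commute.pow_pow_self 𝕂 _ _).tmul (commute_dB hij))

@[simp] theorem comul_KB (h : Admissible N p ξ e) : comul h 𝕂 = 𝕂 ⊗ₜ 𝕂 := lift_KB

@[simp] theorem comul_dB (h : Admissible N p ξ e) (i : Fin t) :
    comul h (𝕕 i) = 𝕕 i ⊗ₜ 1 + (𝕂 ^ e i) ⊗ₜ 𝕕 i := lift_dB i

noncomputable def counit (h : Admissible N p ξ e) : 𝔹 →ₐ[k] k :=
  lift 1 0 (one_pow N) (by simp) (fun i => zero_pow (h.p_ne_zero i)) (by simp)

@[simp] theorem counit_KB (h : Admissible N p ξ e) : counit h 𝕂 = 1 := lift_KB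

@[simp] theorem counit_dB (h : Admissible N p ξ e) (i : Fin t) : counit h (𝕕 i) = 0 := lift_dB i

open MulOpposite in
noncomputable def antipodeOp (h : Admissible N p ξ e) : 𝔹 →ₐ[k] 𝔹ᵐᵒᵖ :=
  lift (op (𝕂 ^ (N - 1))) (fun i => op (-(𝕂 ^ (N - e i) * 𝕕 i)))
    (by rw [← op_pow, ← pow_mul, mul_comm, pow_mul, KB_pow_N, one_pow, op_one])
    (fun i => by
      rw [← op_mul, ← op_mul, ← op_smul, neg_mul (α := 𝔹), mul_neg (α := 𝔹), smul_neg (A := 𝔹),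
        mul_assoc, dB_mul_KB_pow_pred h.N_pos (h.pow_N i), mul_smul_comm, ← mul_assoc,
        ← mul_assoc, ← pow_add, ← pow_add, add_comm])
    (fun i => by rw [← op_pow, neg_pow (R := 𝔹), KB_pow_mul_dB_pow, mul_zero, op_zero])
    (fun i j hij => by
      refine Commute.op (Commute.neg_left (Commute.neg_right (R := 𝔹) ?_))
      refine .mul_left (.mul_right (Commute.pow_pow_self 𝕂 _ _) ?_) (.mul_right ?_ ?_)
      · exact commute_KB_pow_dB (h.pow_sub_eq_one hij.symm)
      · exact (commute_KB_pow_dB (h.pow_sub_eq_one hij)).symm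
      · exact commute_dB hij)

noncomputable def antipode (h : Admissible N p ξ e) : 𝔹 →ₗ[k] 𝔹 :=
  (MulOpposite.opLinearEquiv k).symm.toLinearMap ∘ₗ (antipodeOp h).toLinearMap

section Antipode

variable (h : Admissible N p ξ e)

theorem antipode_apply (x : 𝔹) : antipode h x = (antipodeOp h x).unop := rfl

theorem antipode_mul (x y : 𝔹) : antipode h (x * y) = antipode h y * antipode h x := by
  simp only [antipode_apply, map_mul, MulOpposite.unop_mul]

@[simp] theorem antipode_one : antipode h 1 = 1 := by
  simp only [antipode_apply, map_one, MulOpposite.unop_one]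

theorem antipode_algebraMap (r : k) : antipode h (algebraMap k 𝔹 r) = algebraMap k 𝔹 r := by
  simp only [antipode_apply, AlgHom.commutes, MulOpposite.algebraMap_apply, MulOpposite.unop_op]

theorem antipode_pow (x : 𝔹) (n : ℕ) : antipode h (x ^ n) = antipode h x ^ n := by
  simp only [antipode_apply, map_pow, MulOpposite.unop_pow]

@[simp] theorem antipode_KB : antipode h 𝕂 = 𝕂 ^ (N - 1) := by
  simp [antipode_apply, antipodeOp]

@[simp] theorem antipode_dB (i : Fin t) : antipode h (𝕕 i) = -(𝕂 ^ (N - e i) * 𝕕 i) := by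
  simp [antipode_apply, antipodeOp]

end Antipode

section HopfAxioms

variable (h : Admissible N p ξ e)

theorem comul_coassoc (x : 𝔹) :
    TensorProduct.assoc k 𝔹 𝔹 𝔹 (Algebra.TensorProduct.map (comul h) (AlgHom.id k 𝔹) (comul h x))
      = Algebra.TensorProduct.map (AlgHom.id k 𝔹) (comul h) (comul h x) := by
  suffices (Algebra.TensorProduct.assoc k k k 𝔹 𝔹 𝔹).toAlgHom.comp
      ((Algebra.TensorProduct.map (comul h) (AlgHom.id k 𝔹)).comp (comul h))
      = (Algebra.TensorProduct.map (AlgHom.id k 𝔹) (comul h)).comp (comul h) from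
    DFunLike.congr_fun this x
  refine hom_ext ?_ fun i => ?_
  · simp
  · simp [tmul_add, add_tmul, one_def, add_assoc]

theorem lid_counit_comul (x : 𝔹) :
    TensorProduct.lid k 𝔹 (Algebra.TensorProduct.map (counit h) (AlgHom.id k 𝔹) (comul h x))
      = x := by
  suffices (Algebra.TensorProduct.lid k 𝔹).toAlgHom.comp
      ((Algebra.TensorProduct.map (counit h) (AlgHom.id k 𝔹)).comp (comul h)) = AlgHom.id k 𝔹 from
    DFunLike.congr_fun this x
  exact hom_ext (by simp) fun i => by simp

theorem rid_counit_comul (x : 𝔹) :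
    TensorProduct.rid k 𝔹 (Algebra.TensorProduct.map (AlgHom.id k 𝔹) (counit h) (comul h x))
      = x := by
  suffices (Algebra.TensorProduct.rid k k 𝔹).toAlgHom.comp
      ((Algebra.TensorProduct.map (AlgHom.id k 𝔹) (counit h)).comp (comul h)) = AlgHom.id k 𝔹 from
    DFunLike.congr_fun this x
  exact hom_ext (by simp) fun i => by simp

theorem mul'_antipode_comul (x : 𝔹) :
    LinearMap.mul' k 𝔹 (TensorProduct.map (antipode h) LinearMap.id (comul h x))
      = algebraMap k 𝔹 (counit h x) := by
  induction x using BosAlg.induction with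
  | scalar r => simp [Algebra.TensorProduct.algebraMap_apply, antipode_algebraMap]
  | K => simp [← pow_succ, Nat.sub_one_add_one h.N_pos.ne', KB_pow_N]
  | d i => simp [antipode_pow, KB_pow_pred_pow h.N_pos (h.le_N i)]
  | add x y hx hy => simp only [map_add, hx, hy]
  | mul x y hx hy =>
    rw [map_mul, mul'_map_id_mul_of_eq_algebraMap (antipode_mul h) hx, hy, map_mul, map_mul,
      Algebra.smul_def]

theorem mul'_comul_antipode (x : 𝔹) :
    LinearMap.mul' k 𝔹 (TensorProduct.map LinearMap.id (antipode h) (comul h x))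
      = algebraMap k 𝔹 (counit h x) := by
  induction x using BosAlg.induction with
  | scalar r => simp [Algebra.TensorProduct.algebraMap_apply]
  | K => simp [← pow_succ', Nat.sub_one_add_one h.N_pos.ne', KB_pow_N]
  | d i =>
    simp [mul_neg (α := 𝔹), ← mul_assoc, ← pow_add, Nat.add_sub_cancel' (h.le_N i), KB_pow_N]
  | add x y hx hy => simp only [map_add, hx, hy]
  | mul x y hx hy =>
    rw [map_mul, mul'_id_map_mul_of_eq_algebraMap (antipode_mul h) hy, hx, map_mul (counit h),
      mul_comm (counit h x), map_mul, Algebra.smul_def]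

end HopfAxioms

end BosAlg

section Arithmetic

theorem dvd_div_mul_div_of_mul_dvd {n m N a b : ℕ} (hNm : N * m = n ^ 2) (ha : a ∣ n)
    (hb : b ∣ n) (hab : a * b ∣ m) (ha0 : 0 < a) (hb0 : 0 < b) : N ∣ n / a * (n / b) := by
  obtain ⟨c, rfl⟩ := hab
  refine ⟨c, Nat.eq_of_mul_eq_mul_right (Nat.mul_pos ha0 hb0) ?_⟩
  calc n / a * (n / b) * (a * b) = (n / a * a) * (n / b * b) := by ring
    _ = N * (a * b * c) := by rw [Nat.div_mul_cancel ha, Nat.div_mul_cancel hb, hNm, sq]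
    _ = N * c * (a * b) := by ring

theorem dvd_div_mul_div_mul_iff {n m N p l : ℕ} (hp : p.Prime) (hpn : p ∣ n)
    (hNm : N * (p * m) = n ^ 2) (hpm : ¬ p ∣ m) (hN : 0 < N) :
    N ∣ n / p * (n / p) * l ↔ p ∣ l := by
  have key : n / p * (n / p) * p = N * m := by
    refine Nat.eq_of_mul_eq_mul_right hp.pos ?_
    calc n / p * (n / p) * p * p = (n / p * p) * (n / p * p) := by ring
      _ = N * m * p := by rw [Nat.div_mul_cancel hpn, ← sq, ← hNm]; ring
  rw [← Nat.mul_dvd_mul_iff_right hp.pos, mul_right_comm, key, mul_assoc,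
    Nat.mul_dvd_mul_iff_left hN, ((Nat.Prime.coprime_iff_not_dvd hp).2 hpm).dvd_mul_left]

theorem prime_not_dvd_prod_erase {ι : Type*} [Fintype ι] [DecidableEq ι] {p : ι → ℕ}
    (hp : ∀ i, (p i).Prime) (hinj : Function.Injective p) (i : ι) :
    ¬ p i ∣ ∏ j ∈ univ.erase i, p j := by
  intro hdvd
  obtain ⟨j, hj, hij⟩ := (hp i).prime.exists_mem_finset_dvd hdvd
  exact (mem_erase.1 hj).1 (hinj ((Nat.prime_dvd_prime_iff_eq (hp i) (hp j)).1 hij)).symm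

end Arithmetic

theorem IsPrimitiveRoot.pow_of_dvd_mul_iff {M : Type*} [CommMonoid M] {q : M} {N x P : ℕ}
    (hq : IsPrimitiveRoot q N) (h : ∀ l, N ∣ x * l ↔ P ∣ l) : IsPrimitiveRoot (q ^ x) P :=
  ⟨by rw [← pow_mul, hq.pow_eq_one_iff_dvd, h], fun l hl =>
    (h l).1 ((hq.pow_eq_one_iff_dvd _).1 (by rwa [← pow_mul] at hl))⟩

theorem BosAlg.admissible_of_factorization {k : Type*} [Field k] {t : ℕ} {p a : Fin t → ℕ}
    (hp : ∀ i, (p i).Prime) (hinj : Function.Injective p) (ha : ∀ i, 1 ≤ a i) {n m N : ℕ}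
    (hn : n = ∏ i, p i ^ a i) (hm : m = ∏ i, p i) (hN : N = n ^ 2 / m) {q : k}
    (hq1 : q ^ N = 1) (hq2 : ∀ j : ℕ, 1 ≤ j → j < N → q ^ j ≠ 1) {ξ : Fin t → k}
    (hξ : ∀ i, ξ i = q ^ (n / p i)) : Admissible N p ξ (fun i => n / p i) := by
  classical
  have hpn (i : Fin t) : p i ∣ n :=
    hn ▸ (dvd_pow_self _ (by have := ha i; omega)).trans (dvd_prod_of_mem _ (mem_univ i))
  have hmn : m ∣ n :=
    hn ▸ hm ▸ prod_dvd_prod_of_dvd _ _ fun i _ => dvd_pow_self _ (by have := ha i; omega)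
  have hn0 : 0 < n := by rw [hn]; exact prod_pos fun i _ => pow_pos (hp i).pos _
  have hNm : N * m = n ^ 2 := hN ▸ Nat.div_mul_cancel (hmn.trans (dvd_pow_self n two_ne_zero))
  have hN0 : 0 < N := Nat.pos_of_ne_zero fun h0 => by
    rw [h0, zero_mul] at hNm
    exact (pow_pos hn0 2).ne hNm
  have hq : IsPrimitiveRoot q N := .mk_of_lt q hN0 hq1 fun l hl0 hlN => hq2 l hl0 hlN
  refine ⟨hN0, fun i => (Nat.div_le_self n (p i)).trans ?_, fun i => ?_, fun i => ?_,
    fun i j hij => ?_⟩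
  · refine Nat.le_of_mul_le_mul_right ?_ (hm ▸ prod_pos fun i _ => (hp i).pos :)
    rw [hNm, sq]
    exact Nat.mul_le_mul_left n (Nat.le_of_dvd hn0 hmn)
  · rw [hξ, ← pow_mul, mul_comm, pow_mul, hq1, one_pow]
  · rw [hξ, ← pow_mul]
    refine hq.pow_of_dvd_mul_iff fun l => dvd_div_mul_div_mul_iff (hp i) (hpn i) ?_
      (prime_not_dvd_prod_erase hp hinj i) hN0
    rw [mul_prod_erase _ _ (mem_univ i), ← hm, hNm]
  · rw [hξ, ← pow_mul, hq.pow_eq_one_iff_dvd]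
    refine dvd_div_mul_div_of_mul_dvd hNm (hpn i) (hpn j) ?_ (hp i).pos (hp j).pos
    rw [hm, ← prod_pair hij]
    exact prod_dvd_prod_of_subset _ _ p (subset_univ _)

theorem bosonization_hopfAlgebra_general
    (k : Type*) [Field k] (t : ℕ) (p a : Fin t → ℕ)
    (hp : ∀ i, (p i).Prime) (hinj : Function.Injective p) (ha : ∀ i, 1 ≤ a i)
    (n : ℕ) (hn : n = ∏ i, p i ^ a i)
    (m N : ℕ) (hm : m = ∏ i, p i) (hN : N = n ^ 2 / m)
    (q : k) (hq1 : q ^ N = 1) (hq2 : ∀ j : ℕ, 1 ≤ j → j < N → q ^ j ≠ 1)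
    (ξ : Fin t → k) (hξ : ∀ i, ξ i = q ^ (n / p i)) :
    ∃ (Δ : BosAlg k t N p ξ →ₐ[k] BosAlg k t N p ξ ⊗[k] BosAlg k t N p ξ)
      (ε : BosAlg k t N p ξ →ₐ[k] k)
      (S : BosAlg k t N p ξ →ₗ[k] BosAlg k t N p ξ),
      -- coassociativity
      (∀ x : BosAlg k t N p ξ,
        TensorProduct.assoc k (BosAlg k t N p ξ) (BosAlg k t N p ξ) (BosAlg k t N p ξ)
            (Algebra.TensorProduct.map Δ (AlgHom.id k (BosAlg k t N p ξ)) (Δ x))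
          = Algebra.TensorProduct.map (AlgHom.id k (BosAlg k t N p ξ)) Δ (Δ x)) ∧
      -- counit axioms
      (∀ x : BosAlg k t N p ξ,
        TensorProduct.lid k (BosAlg k t N p ξ)
          (Algebra.TensorProduct.map ε (AlgHom.id k (BosAlg k t N p ξ)) (Δ x)) = x) ∧
      (∀ x : BosAlg k t N p ξ,
        TensorProduct.rid k (BosAlg k t N p ξ)
          (Algebra.TensorProduct.map (AlgHom.id k (BosAlg k t N p ξ)) ε (Δ x)) = x) ∧
      -- antipode axioms
      (∀ x : BosAlg k t N p ξ,
        LinearMap.mul' k (BosAlg k t N p ξ)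
          (TensorProduct.map S LinearMap.id (Δ x)) = algebraMap k (BosAlg k t N p ξ) (ε x)) ∧
      (∀ x : BosAlg k t N p ξ,
        LinearMap.mul' k (BosAlg k t N p ξ)
          (TensorProduct.map LinearMap.id S (Δ x)) = algebraMap k (BosAlg k t N p ξ) (ε x)) ∧
      -- values on the generators
      Δ (KB k t N p ξ) = (KB k t N p ξ) ⊗ₜ[k] (KB k t N p ξ) ∧
      (∀ i, Δ (dB k t N p ξ i)
          = (dB k t N p ξ i) ⊗ₜ[k] (1 : BosAlg k t N p ξ)
            + (KB k t N p ξ ^ (n / p i)) ⊗ₜ[k] (dB k t N p ξ i)) ∧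
      ε (KB k t N p ξ) = 1 ∧
      (∀ i, ε (dB k t N p ξ i) = 0) ∧
      S (KB k t N p ξ) = KB k t N p ξ ^ (N - 1) ∧
      (∀ i, S (dB k t N p ξ i) = -(KB k t N p ξ ^ (N - n / p i) * dB k t N p ξ i)) := by
  have h := BosAlg.admissible_of_factorization hp hinj ha hn hm hN hq1 hq2 hξ
  exact ⟨BosAlg.comul h, BosAlg.counit h, BosAlg.antipode h, BosAlg.comul_coassoc h,
    BosAlg.lid_counit_comul h, BosAlg.rid_counit_comul h, BosAlg.mul'_antipode_comul h,
    BosAlg.mul'_comul_antipode h, BosAlg.comul_KB h, BosAlg.comul_dB h, BosAlg.counit_KB h,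
    BosAlg.counit_dB h, BosAlg.antipode_KB h, BosAlg.antipode_dB h⟩

/-- there exists a Hopf algebra structure on the bosonization `B`
(extending its given `k`-algebra structure: the comultiplication and counit are
`k`-algebra homomorphisms and the antipode is `k`-linear, satisfying the Hopf algebra
axioms), with `Δ(K) = K ⊗ K`, `Δ(d_i) = d_i ⊗ 1 + K^{n_i} ⊗ d_i`, `ε(K) = 1`,
`ε(d_i) = 0`, `S(K) = K^{N−1}` and `S(d_i) = −K^{N−n_i} d_i`. -/
theorem bosonization_hopfAlgebra
    (k : Type*) [Field k] (t : ℕ) (ht : 1 ≤ t) (p a : Fin t → ℕ)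
    (hp : ∀ i, (p i).Prime) (hinj : Function.Injective p) (ha : ∀ i, 1 ≤ a i)
    (n : ℕ) (hn : n = ∏ i, p i ^ a i) (hn2 : 2 ≤ n)
    (m N : ℕ) (hm : m = ∏ i, p i) (hN : N = n ^ 2 / m)
    (q : k) (hq1 : q ^ N = 1) (hq2 : ∀ j : ℕ, 1 ≤ j → j < N → q ^ j ≠ 1)
    (ξ : Fin t → k) (hξ : ∀ i, ξ i = q ^ (n / p i)) :
    ∃ (Δ : BosAlg k t N p ξ →ₐ[k] BosAlg k t N p ξ ⊗[k] BosAlg k t N p ξ)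
      (ε : BosAlg k t N p ξ →ₐ[k] k)
      (S : BosAlg k t N p ξ →ₗ[k] BosAlg k t N p ξ),
      -- coassociativity
      (∀ x : BosAlg k t N p ξ,
        TensorProduct.assoc k (BosAlg k t N p ξ) (BosAlg k t N p ξ) (BosAlg k t N p ξ)
            (Algebra.TensorProduct.map Δ (AlgHom.id k (BosAlg k t N p ξ)) (Δ x))
          = Algebra.TensorProduct.map (AlgHom.id k (BosAlg k t N p ξ)) Δ (Δ x)) ∧
      -- counit axioms
      (∀ x : BosAlg k t N p ξ,
        TensorProduct.lid k (BosAlg k t N p ξ)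
          (Algebra.TensorProduct.map ε (AlgHom.id k (BosAlg k t N p ξ)) (Δ x)) = x) ∧
      (∀ x : BosAlg k t N p ξ,
        TensorProduct.rid k (BosAlg k t N p ξ)
          (Algebra.TensorProduct.map (AlgHom.id k (BosAlg k t N p ξ)) ε (Δ x)) = x) ∧
      -- antipode axioms
      (∀ x : BosAlg k t N p ξ,
        LinearMap.mul' k (BosAlg k t N p ξ)
          (TensorProduct.map S LinearMap.id (Δ x)) = algebraMap k (BosAlg k t N p ξ) (ε x)) ∧
      (∀ x : BosAlg k t N p ξ,
        LinearMap.mul' k (BosAlg k t N p ξ)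
          (TensorProduct.map LinearMap.id S (Δ x)) = algebraMap k (BosAlg k t N p ξ) (ε x)) ∧
      -- values on the generators
      Δ (KB k t N p ξ) = (KB k t N p ξ) ⊗ₜ[k] (KB k t N p ξ) ∧
      (∀ i, Δ (dB k t N p ξ i)
          = (dB k t N p ξ i) ⊗ₜ[k] (1 : BosAlg k t N p ξ)
            + (KB k t N p ξ ^ (n / p i)) ⊗ₜ[k] (dB k t N p ξ i)) ∧
      ε (KB k t N p ξ) = 1 ∧
      (∀ i, ε (dB k t N p ξ i) = 0) ∧
      S (KB k t N p ξ) = KB k t N p ξ ^ (N - 1) ∧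
      (∀ i, S (dB k t N p ξ i) = -(KB k t N p ξ ^ (N - n / p i) * dB k t N p ξ i)) :=
  bosonization_hopfAlgebra_general k t p a hp hinj ha n hn m N hm hN q hq1 hq2 ξ hξ
end

section
/- Let Λ′ = (Σ_{i=0}^{N−1} K^i)·d_1^{p_1−1}⋯d_t^{p_t−1} ∈ B, and let ε : B → k be any k-algebra homomorphism with ε(K) = 1 and ε(d_k) = 0 for all 1 ≤ k ≤ t. Then Λ′ is a left integral: for every h ∈ B, one has h·Λ′ = ε(h)·Λ′. -/
/-- `Λ′ = (∑_{i<N} K^i) · d_1^{p_1−1} ⋯ d_t^{p_t−1}` is a left integral in the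
bosonization `B`: `h · Λ′ = ε(h) · Λ′` for every `h ∈ B` and any algebra homomorphism
`ε : B → k` with `ε(K) = 1` and `ε(d_i) = 0`. -/
theorem bosonization_left_integral
    (k : Type*) [Field k] (t : ℕ) (ht : 1 ≤ t) (p a : Fin t → ℕ)
    (hp : ∀ i, (p i).Prime) (hinj : Function.Injective p) (ha : ∀ i, 1 ≤ a i)
    (n : ℕ) (hn : n = ∏ i, p i ^ a i) (hn2 : 2 ≤ n)
    (m N : ℕ) (hm : m = ∏ i, p i) (hN : N = n ^ 2 / m)
    (q : k) (hq1 : q ^ N = 1) (hq2 : ∀ j : ℕ, 1 ≤ j → j < N → q ^ j ≠ 1)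
    (ξ : Fin t → k) (hξ : ∀ i, ξ i = q ^ (n / p i))
    (ε : BosAlg k t N p ξ →ₐ[k] k)
    (hεK : ε (KB k t N p ξ) = 1) (hεd : ∀ i, ε (dB k t N p ξ i) = 0) :
    ∀ h : BosAlg k t N p ξ,
      h * ((∑ i ∈ Finset.range N, KB k t N p ξ ^ i)
            * ((List.finRange t).map (fun i => dB k t N p ξ i ^ (p i - 1))).prod)
        = ε h • ((∑ i ∈ Finset.range N, KB k t N p ξ ^ i)
            * ((List.finRange t).map (fun i => dB k t N p ξ i ^ (p i - 1))).prod) := by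
  classical
  set K := KB k t N p ξ with hKdef
  set d := dB k t N p ξ with hddef
  set D := ((List.finRange t).map (fun i => d i ^ (p i - 1))).prod with hDdef
  set S := (∑ i ∈ Finset.range N, K ^ i) with hSdef
  -- basic facts about N and q
  have hmdvd : m ∣ n := by
    rw [hm, hn]
    exact Finset.prod_dvd_prod_of_dvd _ _ fun i _ =>
      dvd_pow_self (p i) (Nat.one_le_iff_ne_zero.mp (ha i))
  have hnpos : 0 < n := lt_of_lt_of_le (by norm_num) hn2
  have hmpos : 0 < m := Nat.pos_of_dvd_of_pos hmdvd hnpos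
  have hNpos : 0 < N := by
    rw [hN]
    refine Nat.div_pos ?_ hmpos
    calc m ≤ n := Nat.le_of_dvd hnpos hmdvd
    _ ≤ n ^ 2 := Nat.le_self_pow (by norm_num) n
  have hq0 : q ≠ 0 := by
    intro h
    rw [h, zero_pow hNpos.ne'] at hq1
    exact zero_ne_one hq1
  have hξ0 : ∀ j, ξ j ≠ 0 := fun j => by rw [hξ]; exact pow_ne_zero _ hq0
  -- relations in B
  have hKN : K ^ N = 1 := by
    have := RingQuot.mkAlgHom_rel k (BosRel.K_pow (k := k) (t := t) (N := N) (p := p) (ξ := ξ))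
    simpa [hKdef, KB, map_pow] using this
  have hKd : ∀ j, K * d j = ξ j • (d j * K) := fun j => by
    have := RingQuot.mkAlgHom_rel k (BosRel.K_d (k := k) (N := N) (p := p) (ξ := ξ) j)
    simpa [hKdef, hddef, KB, dB, map_mul, map_smul] using this
  have hdp : ∀ j, d j ^ p j = 0 := fun j => by
    have := RingQuot.mkAlgHom_rel k (BosRel.d_pow (k := k) (N := N) (p := p) (ξ := ξ) j)
    simpa [hddef, dB, map_pow] using this
  have hcomm : ∀ i j, i ≠ j → d i * d j = d j * d i := fun i j hij => by
    have := RingQuot.mkAlgHom_rel k (BosRel.d_comm (k := k) (N := N) (p := p) (ξ := ξ) i j hij)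
    simpa [hddef, dB, map_mul] using this
  -- K * S = S
  have hSK : S * K = S := by
    have h1 : S * (K - 1) = K ^ N - 1 := geom_sum_mul K N
    rw [hKN, sub_self, mul_sub, mul_one, sub_eq_zero] at h1
    exact h1
  have hKS : K * S = S := by
    have hc : Commute K S := Commute.sum_right _ _ _ fun i _ => (Commute.refl K).pow_right i
    rw [hc.eq, hSK]
  -- d j * D = 0
  have hdD : ∀ j, d j * D = 0 := by
    intro j
    have main : ∀ L : List (Fin t), j ∈ L →
        d j * (L.map (fun i => d i ^ (p i - 1))).prod = 0 := by
      intro L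
      induction L with
      | nil => intro h; simp at h
      | cons i L ih =>
        intro hL
        rw [List.map_cons, List.prod_cons]
        by_cases hij : i = j
        · subst hij
          rw [← mul_assoc, ← pow_succ', Nat.sub_add_cancel (hp i).pos, hdp i, zero_mul]
        · have hji : j ≠ i := fun h => hij h.symm
          have hcm : Commute (d j) (d i ^ (p i - 1)) :=
            Commute.pow_right (hcomm j i hji) _
          have hmem : j ∈ L := by
            rcases List.mem_cons.mp hL with h | h
            · exact absurd h.symm hij
            · exact h
          rw [← mul_assoc, hcm.eq, mul_assoc, ih hmem, mul_zero]
    exact main _ (List.mem_finRange j)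
  -- K ^ i * d j = ξ j ^ i • (d j * K ^ i)
  have hKpowd : ∀ j i, K ^ i * d j = ξ j ^ i • (d j * K ^ i) := by
    intro j i
    induction i with
    | zero => simp
    | succ i ih =>
      rw [pow_succ, mul_assoc, hKd j, mul_smul_comm, ← mul_assoc, ih, smul_mul_assoc,
        smul_smul, ← pow_succ', mul_assoc]
  -- d j * (K ^ i * D) = 0
  have hdKD : ∀ j i, d j * (K ^ i * D) = 0 := by
    intro j i
    have hinv : d j * K ^ i = (ξ j ^ i)⁻¹ • (K ^ i * d j) := by
      rw [hKpowd j i, smul_smul, inv_mul_cancel₀ (pow_ne_zero _ (hξ0 j)), one_smul]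
    rw [← mul_assoc, hinv, smul_mul_assoc, mul_assoc, hdD j, mul_zero, smul_zero]
  -- the main argument
  intro h
  obtain ⟨x, rfl⟩ := RingQuot.mkAlgHom_surjective k (BosRel k t N p ξ) h
  induction x with
  | grade0 r =>
    rw [AlgHom.commutes, AlgHom.commutes]
    simp [Algebra.smul_def]
  | grade1 x =>
    rcases x with _ | j
    · have eK : RingQuot.mkAlgHom k (BosRel k t N p ξ)
          (FreeAlgebra.ι k (none : Option (Fin t))) = K := rfl
      rw [eK, hεK, one_smul, ← mul_assoc, hKS]
    · have ed : RingQuot.mkAlgHom k (BosRel k t N p ξ)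
          (FreeAlgebra.ι k (some j : Option (Fin t))) = d j := rfl
      rw [ed, hεd j, zero_smul, hSdef, Finset.sum_mul, Finset.mul_sum]
      exact Finset.sum_eq_zero fun i _ => hdKD j i
  | mul x y hx hy =>
    rw [map_mul, mul_assoc, hy, mul_smul_comm, hx, smul_smul, map_mul, mul_comm]
  | add x y hx hy =>
    rw [map_add, add_mul, hx, hy, map_add, add_smul]
end

section
/- Suppose B is equipped with a Hopf algebra structure over k whose comultiplication Δ, counit ε, and antipode S satisfy Δ(K) = K ⊗ K, Δ(d_k) = d_k ⊗ 1 + K^{n_k} ⊗ d_k, ε(K) = 1, ε(d_k) = 0, S(K) = K^{N−1}, and S(d_k) = −K^{N−n_k}·d_k for all 1 ≤ k ≤ t. Let e be the residue of −(n_1 + ⋯ + n_t) modulo N with 0 ≤ e < N, and set ω = K^e ∈ B. Then: (i) ω is group-like, i.e. Δ(ω) = ω ⊗ ω, ε(ω) = 1, and S(ω)·ω = 1; (ii) conjugation by ω implements the square of the antipode, i.e. for every h ∈ B, S(S(h))·ω = ω·h. -/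
set_option synthInstance.maxHeartbeats 1000000
set_option maxHeartbeats 3000000

open TensorProduct

section Aux
variable {k : Type*} [CommRing k] {A : Type*} [Ring A] [Algebra k A]

lemma aux_conv_tmul_mul (S' : A →ₗ[k] A)
    (hanti : ∀ x y, S' (x * y) = S' y * S' x)
    (a b : A) (v : A ⊗[k] A) :
    LinearMap.mul' k A (TensorProduct.map LinearMap.id S' ((a ⊗ₜ[k] b) * v))
      = a * LinearMap.mul' k A (TensorProduct.map LinearMap.id S' v) * S' b := by
  induction v using TensorProduct.induction_on with
  | zero => simp
  | tmul c d =>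
      simp only [Algebra.TensorProduct.tmul_mul_tmul, TensorProduct.map_tmul,
        LinearMap.mul'_apply, LinearMap.id_coe, id_eq, hanti]
      noncomm_ring
  | add u w hu hw =>
      simp only [mul_add, map_add, hu, hw]
      noncomm_ring

lemma aux_conv_mul (S' : A →ₗ[k] A)
    (hanti : ∀ x y, S' (x * y) = S' y * S' x)
    (u v : A ⊗[k] A) (c : k)
    (hv : LinearMap.mul' k A (TensorProduct.map LinearMap.id S' v) = algebraMap k A c) :
    LinearMap.mul' k A (TensorProduct.map LinearMap.id S' (u * v))
      = c • LinearMap.mul' k A (TensorProduct.map LinearMap.id S' u) := by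
  induction u using TensorProduct.induction_on with
  | zero => simp
  | tmul a b =>
      rw [aux_conv_tmul_mul S' hanti, hv]
      simp only [TensorProduct.map_tmul, LinearMap.mul'_apply, LinearMap.id_coe, id_eq]
      rw [← Algebra.commutes c a, Algebra.smul_def, mul_assoc]
  | add u w hu hw =>
      simp only [add_mul, map_add, hu, hw, smul_add]

lemma aux_antipode_unique (Δ : A →ₐ[k] A ⊗[k] A) (ε : A →ₐ[k] k) (S S' : A →ₗ[k] A)
    (hcoassoc : ∀ x : A,
      TensorProduct.assoc k A A A
          (Algebra.TensorProduct.map Δ (AlgHom.id k A) (Δ x))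
        = Algebra.TensorProduct.map (AlgHom.id k A) Δ (Δ x))
    (hcol : ∀ x : A,
      TensorProduct.lid k A (Algebra.TensorProduct.map ε (AlgHom.id k A) (Δ x)) = x)
    (hcor : ∀ x : A,
      TensorProduct.rid k A (Algebra.TensorProduct.map (AlgHom.id k A) ε (Δ x)) = x)
    (hS1 : ∀ x : A,
      LinearMap.mul' k A (TensorProduct.map S LinearMap.id (Δ x)) = algebraMap k A (ε x))
    (hS2' : ∀ x : A,
      LinearMap.mul' k A (TensorProduct.map LinearMap.id S' (Δ x)) = algebraMap k A (ε x))
    (x : A) : S x = S' x := by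
  set μ := LinearMap.mul' k A
  have key : ∀ w : (A ⊗[k] A) ⊗[k] A,
      μ (TensorProduct.map S (μ ∘ₗ TensorProduct.map LinearMap.id S')
        (TensorProduct.assoc k A A A w))
      = μ (TensorProduct.map (μ ∘ₗ TensorProduct.map S LinearMap.id) S' w) := by
    intro w
    induction w using TensorProduct.induction_on with
    | zero => simp
    | tmul u c =>
        induction u using TensorProduct.induction_on with
        | zero => simp
        | tmul a b =>
            simp only [TensorProduct.assoc_tmul, TensorProduct.map_tmul,
              LinearMap.coe_comp, Function.comp_apply, LinearMap.mul'_apply,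
              LinearMap.id_coe, id_eq, μ]
            rw [mul_assoc]
        | add u₁ u₂ h1 h2 =>
            simp only [TensorProduct.add_tmul, map_add, h1, h2]
    | add w₁ w₂ h1 h2 => simp only [map_add, h1, h2]
  have h1 : ∀ u : A ⊗[k] A,
      μ (TensorProduct.map S (μ ∘ₗ TensorProduct.map LinearMap.id S')
        (Algebra.TensorProduct.map (AlgHom.id k A) Δ u))
      = S (TensorProduct.rid k A (Algebra.TensorProduct.map (AlgHom.id k A) ε u)) := by
    intro u
    induction u using TensorProduct.induction_on with
    | zero => simp
    | tmul a b =>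
        simp only [Algebra.TensorProduct.map_tmul, AlgHom.coe_id, id_eq,
          TensorProduct.map_tmul, LinearMap.coe_comp, Function.comp_apply,
          LinearMap.mul'_apply, TensorProduct.rid_tmul, map_smul, μ]
        rw [hS2' b]
        rw [← Algebra.commutes (ε b) (S a), ← Algebra.smul_def]
    | add u₁ u₂ hu1 hu2 => simp only [map_add, hu1, hu2]
  have h2 : ∀ u : A ⊗[k] A,
      μ (TensorProduct.map (μ ∘ₗ TensorProduct.map S LinearMap.id) S'
        (Algebra.TensorProduct.map Δ (AlgHom.id k A) u))
      = S' (TensorProduct.lid k A (Algebra.TensorProduct.map ε (AlgHom.id k A) u)) := by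
    intro u
    induction u using TensorProduct.induction_on with
    | zero => simp
    | tmul a b =>
        simp only [Algebra.TensorProduct.map_tmul, AlgHom.coe_id, id_eq,
          TensorProduct.map_tmul, LinearMap.coe_comp, Function.comp_apply,
          LinearMap.mul'_apply, TensorProduct.lid_tmul, map_smul, μ]
        rw [hS1 a, Algebra.smul_def]
    | add u₁ u₂ hu1 hu2 => simp only [map_add, hu1, hu2]
  calc S x = S (TensorProduct.rid k A
        (Algebra.TensorProduct.map (AlgHom.id k A) ε (Δ x))) := by rw [hcor]
    _ = μ (TensorProduct.map S (μ ∘ₗ TensorProduct.map LinearMap.id S')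
        (Algebra.TensorProduct.map (AlgHom.id k A) Δ (Δ x))) := (h1 (Δ x)).symm
    _ = μ (TensorProduct.map S (μ ∘ₗ TensorProduct.map LinearMap.id S')
        (TensorProduct.assoc k A A A
          (Algebra.TensorProduct.map Δ (AlgHom.id k A) (Δ x)))) := by rw [hcoassoc]
    _ = μ (TensorProduct.map (μ ∘ₗ TensorProduct.map S LinearMap.id) S'
        (Algebra.TensorProduct.map Δ (AlgHom.id k A) (Δ x))) := key _
    _ = S' (TensorProduct.lid k A
        (Algebra.TensorProduct.map ε (AlgHom.id k A) (Δ x))) := h2 (Δ x)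
    _ = S' x := by rw [hcol]

end Aux

/-- suppose the bosonization `B` carries a Hopf algebra structure `(Δ, ε, S)`
with `Δ(K) = K ⊗ K`, `Δ(d_i) = d_i ⊗ 1 + K^{n_i} ⊗ d_i`, `ε(K) = 1`, `ε(d_i) = 0`,
`S(K) = K^{N−1}`, `S(d_i) = −K^{N−n_i} d_i`.  Let `e` be the residue of `−(n_1 + ⋯ + n_t)`
modulo `N` with `0 ≤ e < N` and `ω = K^e`.  Then `ω` is group-like and conjugation by `ω`
implements the square of the antipode. -/
theorem bosonization_spherical_element
    (k : Type*) [Field k] (t : ℕ) (ht : 1 ≤ t) (p a : Fin t → ℕ)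
    (hp : ∀ i, (p i).Prime) (hinj : Function.Injective p) (ha : ∀ i, 1 ≤ a i)
    (n : ℕ) (hn : n = ∏ i, p i ^ a i) (hn2 : 2 ≤ n)
    (m N : ℕ) (hm : m = ∏ i, p i) (hN : N = n ^ 2 / m)
    (q : k) (hq1 : q ^ N = 1) (hq2 : ∀ j : ℕ, 1 ≤ j → j < N → q ^ j ≠ 1)
    (ξ : Fin t → k) (hξ : ∀ i, ξ i = q ^ (n / p i))
    (Δ : BosAlg k t N p ξ →ₐ[k] BosAlg k t N p ξ ⊗[k] BosAlg k t N p ξ)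
    (ε : BosAlg k t N p ξ →ₐ[k] k)
    (S : BosAlg k t N p ξ →ₗ[k] BosAlg k t N p ξ)
    -- Hopf algebra axioms
    (hcoassoc : ∀ x : BosAlg k t N p ξ,
      TensorProduct.assoc k (BosAlg k t N p ξ) (BosAlg k t N p ξ) (BosAlg k t N p ξ)
          (Algebra.TensorProduct.map Δ (AlgHom.id k (BosAlg k t N p ξ)) (Δ x))
        = Algebra.TensorProduct.map (AlgHom.id k (BosAlg k t N p ξ)) Δ (Δ x))
    (hcol : ∀ x : BosAlg k t N p ξ,
      TensorProduct.lid k (BosAlg k t N p ξ)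
        (Algebra.TensorProduct.map ε (AlgHom.id k (BosAlg k t N p ξ)) (Δ x)) = x)
    (hcor : ∀ x : BosAlg k t N p ξ,
      TensorProduct.rid k (BosAlg k t N p ξ)
        (Algebra.TensorProduct.map (AlgHom.id k (BosAlg k t N p ξ)) ε (Δ x)) = x)
    (hS1 : ∀ x : BosAlg k t N p ξ,
      LinearMap.mul' k (BosAlg k t N p ξ)
        (TensorProduct.map S LinearMap.id (Δ x)) = algebraMap k (BosAlg k t N p ξ) (ε x))
    (hS2 : ∀ x : BosAlg k t N p ξ,
      LinearMap.mul' k (BosAlg k t N p ξ)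
        (TensorProduct.map LinearMap.id S (Δ x)) = algebraMap k (BosAlg k t N p ξ) (ε x))
    -- values on the generators
    (hΔK : Δ (KB k t N p ξ) = (KB k t N p ξ) ⊗ₜ[k] (KB k t N p ξ))
    (hΔd : ∀ i, Δ (dB k t N p ξ i)
        = (dB k t N p ξ i) ⊗ₜ[k] (1 : BosAlg k t N p ξ)
          + (KB k t N p ξ ^ (n / p i)) ⊗ₜ[k] (dB k t N p ξ i))
    (hεK : ε (KB k t N p ξ) = 1) (hεd : ∀ i, ε (dB k t N p ξ i) = 0)
    (hSK : S (KB k t N p ξ) = KB k t N p ξ ^ (N - 1))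
    (hSd : ∀ i, S (dB k t N p ξ i) = -(KB k t N p ξ ^ (N - n / p i) * dB k t N p ξ i))
    -- the residue `e` of `−(n_1 + ⋯ + n_t)` modulo `N`
    (e : ℕ) (he1 : e < N) (he2 : (e + ∑ i, n / p i) % N = 0) :
    Δ (KB k t N p ξ ^ e) = (KB k t N p ξ ^ e) ⊗ₜ[k] (KB k t N p ξ ^ e) ∧
    ε (KB k t N p ξ ^ e) = 1 ∧
    S (KB k t N p ξ ^ e) * KB k t N p ξ ^ e = 1 ∧
    (∀ h : BosAlg k t N p ξ,
      S (S h) * KB k t N p ξ ^ e = KB k t N p ξ ^ e * h) := by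
  classical
  -- ## arithmetic preliminaries
  have hp0 : ∀ i, 0 < p i := fun i => (hp i).pos
  have hp2 : ∀ i, 2 ≤ p i := fun i => (hp i).two_le
  have hpdvd : ∀ i, p i ∣ n := by
    intro i
    rw [hn]
    exact dvd_trans (dvd_pow_self (p i) (by have := ha i; omega))
      (Finset.dvd_prod_of_mem _ (Finset.mem_univ i))
  have hmn : m ∣ n := by
    rw [hm, hn]
    exact Finset.prod_dvd_prod_of_dvd _ _ fun i _ =>
      dvd_pow_self (p i) (by have := ha i; omega)
  have hn0 : 0 < n := by omega
  have hm0 : 0 < m := Nat.pos_of_dvd_of_pos hmn hn0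
  have hNn : N = n * (n / m) := by rw [hN, pow_two, Nat.mul_div_assoc n hmn]
  have hnm1 : 1 ≤ n / m := (Nat.one_le_div_iff hm0).mpr (Nat.le_of_dvd hn0 hmn)
  have hnleN : n ≤ N := by
    rw [hNn]; exact Nat.le_mul_of_pos_right n hnm1
  have hN0 : 0 < N := by omega
  have hNm : N * m = n ^ 2 := by
    rw [hN]; exact Nat.div_mul_cancel (hmn.trans (dvd_pow_self n two_ne_zero))
  have hni_lt : ∀ i, n / p i < n := fun i => Nat.div_lt_self hn0 (hp2 i)
  have hni_pos : ∀ i, 0 < n / p i :=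
    fun i => Nat.div_pos (Nat.le_of_dvd hn0 (hpdvd i)) (hp0 i)
  have hni_ltN : ∀ i, n / p i < N := fun i => lt_of_lt_of_le (hni_lt i) hnleN
  have hNdvd : ∀ i j : Fin t, i ≠ j → N ∣ (n / p i) * (n / p j) := by
    intro i j hij
    have hji : j ∈ Finset.univ.erase i :=
      Finset.mem_erase.mpr ⟨hij.symm, Finset.mem_univ j⟩
    have hmeq : m = p i * (p j * ∏ l ∈ (Finset.univ.erase i).erase j, p l) := by
      rw [hm, ← Finset.mul_prod_erase _ _ (Finset.mem_univ i),
        ← Finset.mul_prod_erase _ _ hji]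
    set c := ∏ l ∈ (Finset.univ.erase i).erase j, p l with hc
    have h1 : n / p i * p i = n := Nat.div_mul_cancel (hpdvd i)
    have h2 : n / p j * p j = n := Nat.div_mul_cancel (hpdvd j)
    have hpij : 0 < p i * p j := Nat.mul_pos (hp0 i) (hp0 j)
    have key : (n / p i) * (n / p j) * (p i * p j) = N * c * (p i * p j) := by
      calc (n / p i) * (n / p j) * (p i * p j)
          = (n / p i * p i) * (n / p j * p j) := by ring
        _ = n ^ 2 := by rw [h1, h2, pow_two]
        _ = N * m := hNm.symm
        _ = N * c * (p i * p j) := by rw [hmeq]; ring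
    exact ⟨c, Nat.eq_of_mul_eq_mul_right hpij key⟩
  have hqmod : ∀ x y : ℕ, x % N = y % N → q ^ x = q ^ y := by
    intro x y h
    have e1 : q ^ x = q ^ (x % N) := by
      conv_lhs => rw [← Nat.div_add_mod x N, pow_add, pow_mul, hq1, one_pow, one_mul]
    have e2 : q ^ y = q ^ (y % N) := by
      conv_lhs => rw [← Nat.div_add_mod y N, pow_add, pow_mul, hq1, one_pow, one_mul]
    rw [e1, e2, h]
  have hq0 : ∀ x : ℕ, N ∣ x → q ^ x = 1 := by
    intro x hx
    obtain ⟨c, rfl⟩ := hx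
    simpa using hqmod (N * c) 0 (by simp [Nat.mul_mod_right])
  have hξN : ∀ i, ξ i ^ N = 1 := by
    intro i
    rw [hξ i, ← pow_mul]
    exact hq0 _ (dvd_mul_left N (n / p i))
  have hξ0 : ∀ i, ξ i ≠ 0 := by
    intro i h
    have h1 := hξN i
    rw [h, zero_pow (by omega : N ≠ 0)] at h1
    exact zero_ne_one h1
  have hξsub : ∀ (i : Fin t) (b : ℕ), b ≤ N → ξ i ^ (N - b) = (ξ i ^ b)⁻¹ := by
    intro i b hb
    have h1 : ξ i ^ (N - b) * ξ i ^ b = 1 := by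
      rw [← pow_add, Nat.sub_add_cancel hb, hξN i]
    exact eq_inv_of_mul_eq_one_left h1
  have hNdvd2 : ∀ i, N ∣ (n / p i) * (e + n / p i) := by
    intro i
    have hsum : N ∣ e + ∑ j, n / p j := Nat.dvd_of_mod_eq_zero he2
    have hbig : N ∣ (n / p i) * (e + ∑ j, n / p j) := Dvd.dvd.mul_left hsum _
    have hsplit : (n / p i) * (e + ∑ j, n / p j)
        = (n / p i) * (e + n / p i)
          + ∑ j ∈ Finset.univ.erase i, (n / p i) * (n / p j) := by
      rw [← Finset.add_sum_erase _ _ (Finset.mem_univ i), ← Finset.mul_sum]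
      ring
    have hrest : N ∣ ∑ j ∈ Finset.univ.erase i, (n / p i) * (n / p j) :=
      Finset.dvd_sum fun j hj => hNdvd i j (Finset.mem_erase.mp hj).1.symm
    rw [hsplit] at hbig
    exact (Nat.dvd_add_right hrest).mp (by rwa [add_comm] at hbig)
  have hξe : ∀ i, ξ i ^ (e + n / p i) = 1 := by
    intro i
    rw [hξ i, ← pow_mul]
    exact hq0 _ (hNdvd2 i)
  -- ## relations in B
  set K : BosAlg k t N p ξ := KB k t N p ξ with hKdef
  set d : Fin t → BosAlg k t N p ξ := dB k t N p ξ with hddef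
  have bneg_mul : ∀ x y : BosAlg k t N p ξ, -x * y = -(x * y) := fun x y => neg_mul x y
  have bmul_neg : ∀ x y : BosAlg k t N p ξ, x * -y = -(x * y) := fun x y => mul_neg x y
  have bneg_neg : ∀ x : BosAlg k t N p ξ, -(-x) = x := fun x => neg_neg x
  have bsmul_neg : ∀ (c : k) (x : BosAlg k t N p ξ), c • (-x) = -(c • x) :=
    fun c x => smul_neg c x
  have bneg_inj : ∀ x y : BosAlg k t N p ξ, (-x = -y) ↔ x = y := fun x y => neg_inj
  have bneg_pow : ∀ (x : BosAlg k t N p ξ) (j : ℕ), (-x) ^ j = (-1) ^ j * x ^ j :=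
    fun x j => neg_pow x j
  have hKmk : RingQuot.mkAlgHom k (BosRel k t N p ξ) (FreeAlgebra.ι k none) = K := by
    rw [hKdef]; rfl
  have hdmk : ∀ i, RingQuot.mkAlgHom k (BosRel k t N p ξ) (FreeAlgebra.ι k (some i)) = d i := by
    intro i; rw [hddef]; rfl
  have hKN : K ^ N = 1 := by
    rw [← hKmk, ← map_pow, RingQuot.mkAlgHom_rel k BosRel.K_pow, map_one]
  have hKd : ∀ i, K * d i = ξ i • (d i * K) := by
    intro i
    rw [← hKmk, ← hdmk i, ← map_mul, RingQuot.mkAlgHom_rel k (BosRel.K_d i),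
      map_smul, map_mul]
  have hdp : ∀ i, d i ^ p i = 0 := by
    intro i
    rw [← hdmk i, ← map_pow, RingQuot.mkAlgHom_rel k (BosRel.d_pow i), map_zero]
  have hdcomm : ∀ i j, i ≠ j → d i * d j = d j * d i := by
    intro i j hij
    rw [← hdmk i, ← hdmk j, ← map_mul, RingQuot.mkAlgHom_rel k (BosRel.d_comm i j hij),
      map_mul]
  have hKad : ∀ (s : ℕ) (i : Fin t), K ^ s * d i = ξ i ^ s • (d i * K ^ s) := by
    intro s i
    induction s with
    | zero => simp
    | succ s ih =>
        calc K ^ (s+1) * d i = K ^ s * (K * d i) := by rw [pow_succ, mul_assoc]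
          _ = K ^ s * (ξ i • (d i * K)) := by rw [hKd i]
          _ = ξ i • (K ^ s * d i * K) := by rw [mul_smul_comm, mul_assoc]
          _ = ξ i • ((ξ i ^ s • (d i * K ^ s)) * K) := by rw [ih]
          _ = (ξ i * ξ i ^ s) • (d i * (K ^ s * K)) := by
              rw [smul_mul_assoc, smul_smul, mul_assoc]
          _ = ξ i ^ (s+1) • (d i * K ^ (s+1)) := by rw [← pow_succ', ← pow_succ]
  have hdKa : ∀ (i : Fin t) (s : ℕ), d i * K ^ s = (ξ i ^ s)⁻¹ • (K ^ s * d i) := by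
    intro i s
    rw [hKad s i, smul_smul, inv_mul_cancel₀ (pow_ne_zero _ (hξ0 i)), one_smul]
  have hdbKa : ∀ (i : Fin t) (b s : ℕ),
      d i ^ b * K ^ s = ((ξ i ^ s) ^ b)⁻¹ • (K ^ s * d i ^ b) := by
    intro i b s
    induction b with
    | zero => simp
    | succ b ih =>
        calc d i ^ (b+1) * K ^ s = d i ^ b * (d i * K ^ s) := by rw [pow_succ, mul_assoc]
          _ = d i ^ b * ((ξ i ^ s)⁻¹ • (K ^ s * d i)) := by rw [hdKa]
          _ = (ξ i ^ s)⁻¹ • (d i ^ b * K ^ s * d i) := by rw [mul_smul_comm, mul_assoc]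
          _ = (ξ i ^ s)⁻¹ • ((((ξ i ^ s) ^ b)⁻¹ • (K ^ s * d i ^ b)) * d i) := by rw [ih]
          _ = ((ξ i ^ s)⁻¹ * ((ξ i ^ s) ^ b)⁻¹) • (K ^ s * (d i ^ b * d i)) := by
              rw [smul_mul_assoc, smul_smul, mul_assoc]
          _ = ((ξ i ^ s) ^ (b+1))⁻¹ • (K ^ s * d i ^ (b+1)) := by
              rw [← mul_inv, ← pow_succ', ← pow_succ]
  have hKmod : ∀ s : ℕ, K ^ s = K ^ (s % N) := by
    intro s
    conv_lhs => rw [← Nat.div_add_mod s N, pow_add, pow_mul, hKN, one_pow, one_mul]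
  have hKsd_pow : ∀ (s : ℕ) (i : Fin t) (j : ℕ),
      ∃ c : k, (K ^ s * d i) ^ j = c • (K ^ (s * j) * d i ^ j) := by
    intro s i j
    induction j with
    | zero => exact ⟨1, by simp⟩
    | succ j ih =>
        obtain ⟨c, hc⟩ := ih
        refine ⟨c * ((ξ i ^ s) ^ j)⁻¹, ?_⟩
        calc (K ^ s * d i) ^ (j+1) = (K ^ s * d i) ^ j * (K ^ s * d i) := pow_succ _ _
          _ = c • ((K ^ (s*j) * d i ^ j) * (K ^ s * d i)) := by rw [hc, smul_mul_assoc]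
          _ = c • (K ^ (s*j) * (d i ^ j * K ^ s) * d i) := by
              rw [mul_assoc (K ^ (s*j)), mul_assoc (K ^ (s*j)), mul_assoc (d i ^ j)]
          _ = (c * ((ξ i ^ s) ^ j)⁻¹) • (K ^ (s*j) * (K ^ s * d i ^ j) * d i) := by
              rw [hdbKa i j s, mul_smul_comm, smul_mul_assoc, smul_smul]
          _ = (c * ((ξ i ^ s) ^ j)⁻¹) • (K ^ (s*(j+1)) * d i ^ (j+1)) := by
              rw [← mul_assoc, ← pow_add, mul_assoc, ← pow_succ,
                show s * j + s = s * (j + 1) by ring]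
  have hKsd_p0 : ∀ (s : ℕ) (i : Fin t), (K ^ s * d i) ^ p i = 0 := by
    intro s i
    obtain ⟨c, hc⟩ := hKsd_pow s i (p i)
    rw [hc, hdp i, mul_zero, smul_zero]
  -- ## construction of the antihomomorphism S'
  set g : Option (Fin t) → (BosAlg k t N p ξ)ᵐᵒᵖ := fun o =>
    Option.rec (MulOpposite.op (K ^ (N - 1)))
      (fun i => MulOpposite.op (-(K ^ (N - n / p i) * d i))) o with hgdef
  have hgnone : FreeAlgebra.lift k g (FreeAlgebra.ι k none)
      = MulOpposite.op (K ^ (N - 1)) := by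
    rw [FreeAlgebra.lift_ι_apply]
  have hgsome : ∀ i, FreeAlgebra.lift k g (FreeAlgebra.ι k (some i))
      = MulOpposite.op (-(K ^ (N - n / p i) * d i)) := by
    intro i; rw [FreeAlgebra.lift_ι_apply]
  have hgrel : ∀ ⦃x y⦄, BosRel k t N p ξ x y →
      FreeAlgebra.lift k g x = FreeAlgebra.lift k g y := by
    intro x y hxy
    cases hxy with
    | K_pow =>
        rw [map_pow, hgnone, map_one, ← MulOpposite.op_pow, ← pow_mul,
          hKmod ((N-1) * N), Nat.mul_mod_left, pow_zero, MulOpposite.op_one]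
    | K_d i =>
        rw [map_mul, map_smul, map_mul, hgnone, hgsome i,
          ← MulOpposite.op_mul, ← MulOpposite.op_mul, ← MulOpposite.op_smul]
        congr 1
        rw [bneg_mul, bmul_neg, bsmul_neg, bneg_inj]
        calc K ^ (N - n / p i) * d i * K ^ (N - 1)
            = K ^ (N - n / p i) * ((ξ i ^ (N-1))⁻¹ • (K ^ (N-1) * d i)) := by
              rw [mul_assoc, hdKa i (N-1)]
          _ = (ξ i ^ (N-1))⁻¹ • (K ^ (N - n / p i + (N-1)) * d i) := by
              rw [mul_smul_comm, ← mul_assoc, ← pow_add]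
          _ = ξ i • (K ^ (N - 1 + (N - n / p i)) * d i) := by
              rw [hξsub i 1 (by omega), pow_one, inv_inv, Nat.add_comm]
          _ = ξ i • (K ^ (N-1) * (K ^ (N - n / p i) * d i)) := by
              rw [pow_add, mul_assoc]
    | d_pow i =>
        rw [map_pow, hgsome i, map_zero, ← MulOpposite.op_pow, bneg_pow,
          hKsd_p0 _ i, mul_zero, MulOpposite.op_zero]
    | d_comm i j hij =>
        rw [map_mul, map_mul, hgsome i, hgsome j,
          ← MulOpposite.op_mul, ← MulOpposite.op_mul]
        congr 1
        rw [bneg_mul, bneg_mul, bmul_neg, bmul_neg, bneg_neg, bneg_neg]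
        have hscal : ξ i ^ (N - n / p j) = ξ j ^ (N - n / p i) := by
          rw [hξsub i _ (le_of_lt (hni_ltN j)), hξsub j _ (le_of_lt (hni_ltN i)),
            hξ i, hξ j, ← pow_mul, ← pow_mul, Nat.mul_comm]
        have hside : ∀ i' j' : Fin t,
            K ^ (N - n / p i') * d i' * (K ^ (N - n / p j') * d j')
              = (ξ i' ^ (N - n / p j'))⁻¹ •
                (K ^ (N - n / p i' + (N - n / p j')) * (d i' * d j')) := by
          intro i' j'
          calc K ^ (N - n / p i') * d i' * (K ^ (N - n / p j') * d j')
              = K ^ (N - n / p i') * (d i' * K ^ (N - n / p j')) * d j' := by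
                rw [mul_assoc, mul_assoc, mul_assoc]
            _ = (ξ i' ^ (N - n / p j'))⁻¹ •
                (K ^ (N - n / p i' + (N - n / p j')) * (d i' * d j')) := by
                rw [hdKa i', mul_smul_comm, smul_mul_assoc, ← mul_assoc, ← pow_add,
                  mul_assoc]
        rw [hside j i, hside i j, ← hscal, hdcomm j i hij.symm,
          Nat.add_comm (N - n / p j) (N - n / p i)]
  -- ## S' as algebra morphism to the opposite algebra
  set Sop : BosAlg k t N p ξ →ₐ[k] (BosAlg k t N p ξ)ᵐᵒᵖ :=
    RingQuot.liftAlgHom k ⟨FreeAlgebra.lift k g, hgrel⟩ with hSopdef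
  have hSopmk : ∀ x, Sop (RingQuot.mkAlgHom k (BosRel k t N p ξ) x)
      = FreeAlgebra.lift k g x := by
    intro x
    rw [hSopdef]
    exact RingQuot.liftAlgHom_mkAlgHom_apply _ _ _ _
  set S' : BosAlg k t N p ξ →ₗ[k] BosAlg k t N p ξ :=
    (MulOpposite.opLinearEquiv k).symm.toLinearMap ∘ₗ Sop.toLinearMap with hS'def
  have hS'x : ∀ x, S' x = MulOpposite.unop (Sop x) := fun x => rfl
  have hS'anti : ∀ x y, S' (x * y) = S' y * S' x := by
    intro x y
    rw [hS'x, hS'x, hS'x, map_mul]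
    rfl
  have hS'one : S' 1 = 1 := by rw [hS'x, map_one]; rfl
  have hS'alg : ∀ r : k, S' (algebraMap k (BosAlg k t N p ξ) r)
      = algebraMap k (BosAlg k t N p ξ) r := by
    intro r
    rw [hS'x, AlgHom.commutes]
    rfl
  have hS'pow : ∀ (x : BosAlg k t N p ξ) (j : ℕ), S' (x ^ j) = S' x ^ j := by
    intro x j
    rw [hS'x, map_pow, MulOpposite.unop_pow, hS'x]
  have hS'K : S' K = K ^ (N - 1) := by
    rw [hS'x, ← hKmk, hSopmk, hgnone, MulOpposite.unop_op, hKmk]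
  have hS'd : ∀ i, S' (d i) = -(K ^ (N - n / p i) * d i) := by
    intro i
    rw [hS'x, ← hdmk i, hSopmk, hgsome i, MulOpposite.unop_op, hdmk i]
  -- ## S' is a right inverse of the identity in the convolution algebra
  have hS2' : ∀ x : BosAlg k t N p ξ,
      LinearMap.mul' k (BosAlg k t N p ξ)
        (TensorProduct.map LinearMap.id S' (Δ x))
        = algebraMap k (BosAlg k t N p ξ) (ε x) := by
    intro x
    obtain ⟨y, rfl⟩ := RingQuot.mkAlgHom_surjective k (BosRel k t N p ξ) x
    induction y using FreeAlgebra.induction with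
    | grade0 r =>
        rw [AlgHom.commutes, AlgHom.commutes, AlgHom.commutes,
          Algebra.TensorProduct.algebraMap_apply, TensorProduct.map_tmul,
          LinearMap.mul'_apply, hS'one, mul_one]
        simp
    | grade1 o =>
        cases o with
        | none =>
            rw [hKmk, hΔK, TensorProduct.map_tmul, LinearMap.mul'_apply, hS'K, hεK,
              map_one, LinearMap.id_coe, id_eq, ← pow_succ', Nat.sub_add_cancel hN0,
              hKN]
        | some i =>
            rw [hdmk i, hΔd i, map_add, TensorProduct.map_tmul, TensorProduct.map_tmul,
              map_add, LinearMap.mul'_apply, LinearMap.mul'_apply, hS'one, hS'd i,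
              hεd i, map_zero, LinearMap.id_coe, id_eq, id_eq, mul_one, bmul_neg,
              ← mul_assoc, ← pow_add, Nat.add_sub_cancel' (le_of_lt (hni_ltN i)), hKN,
              one_mul, add_neg_cancel]
    | mul x y hx hy =>
        rw [map_mul (RingQuot.mkAlgHom k (BosRel k t N p ξ)) x y, map_mul Δ, map_mul ε,
          aux_conv_mul S' hS'anti _ _ _ hy, hx, Algebra.smul_def, ← map_mul,
          mul_comm (ε ((RingQuot.mkAlgHom k (BosRel k t N p ξ)) y))]
    | add x y hx hy =>
        rw [map_add (RingQuot.mkAlgHom k (BosRel k t N p ξ)) x y, map_add Δ, map_add ε,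
          map_add (TensorProduct.map LinearMap.id S'),
          map_add (LinearMap.mul' k (BosAlg k t N p ξ)), hx, hy, map_add]
  -- ## S = S'
  have hSeq : ∀ x, S x = S' x :=
    aux_antipode_unique Δ ε S S' hcoassoc hcol hcor hS1 hS2'
  have hSS : ∀ z, S (S z) = S' (S' z) := by
    intro z; rw [hSeq, hSeq]
  have bSneg : ∀ x : BosAlg k t N p ξ, S (-x) = -S x := fun x => map_neg S x
  -- arithmetic identity for the generators `d i`
  have hξA : ∀ i, ξ i ^ ((N-1) * (N - n / p i) + e) = 1 := by
    intro i
    have hA : (N-1) * (N - n / p i) + e = (e + n / p i) + N * (N - n / p i - 1) := by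
      have h1 : 1 ≤ N := hN0
      have h2 : n / p i < N := hni_ltN i
      have h3 : 1 ≤ N - n / p i := by omega
      zify [h1, le_of_lt h2, h3]
      ring
    rw [hA, pow_add, hξe i, one_mul, pow_mul, hξN i, one_pow]
  -- ## conclusion
  refine ⟨?_, ?_, ?_, ?_⟩
  · rw [map_pow, hΔK, Algebra.TensorProduct.tmul_pow]
  · rw [map_pow, hεK, one_pow]
  · have h := hS1 (K ^ e)
    rw [map_pow Δ, hΔK, Algebra.TensorProduct.tmul_pow, TensorProduct.map_tmul,
      LinearMap.mul'_apply, map_pow ε, hεK, one_pow, map_one, LinearMap.id_coe,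
      id_eq] at h
    exact h
  · intro h
    obtain ⟨y, rfl⟩ := RingQuot.mkAlgHom_surjective k (BosRel k t N p ξ) h
    induction y using FreeAlgebra.induction with
    | grade0 r =>
        rw [AlgHom.commutes, hSeq ((algebraMap k (BosAlg k t N p ξ)) r), hS'alg,
          hSeq, hS'alg]
        exact Algebra.commutes r (K ^ e)
    | grade1 o =>
        cases o with
        | none =>
            rw [hKmk, hSK, hSeq, hS'pow, hS'K, ← pow_mul, ← pow_add, ← pow_succ,
              hKmod ((N-1)*(N-1) + e), hKmod (e+1)]
            congr 1
            obtain ⟨M, hM⟩ : ∃ M, N = M + 2 := ⟨N - 2, by omega⟩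
            subst hM
            have h1 : M + 2 - 1 = M + 1 := rfl
            rw [h1, show (M+1)*(M+1) + e = (M+2)*M + (e+1) by ring, Nat.mul_add_mod]
        | some i =>
            rw [hdmk i, hSd i, bSneg, hSeq, hS'anti, hS'd i, hS'pow, hS'K,
              bneg_mul, bneg_mul, bneg_mul, bneg_neg, ← pow_mul, mul_assoc,
              ← pow_add, mul_assoc,
              hdKa i ((N-1) * (N - n / p i) + e), hξA i, inv_one, one_smul,
              ← mul_assoc, ← pow_add,
              hKmod ((N - n / p i) + ((N-1) * (N - n / p i) + e)),
              show (N - n / p i) + ((N-1) * (N - n / p i) + e)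
                  = N * (N - n / p i) + e by
                zify [(hN0 : 1 ≤ N)]; ring,
              Nat.mul_add_mod, Nat.mod_eq_of_lt he1]
    | mul x y hx hy =>
        rw [map_mul (RingQuot.mkAlgHom k (BosRel k t N p ξ)) x y, hSS, hS'anti,
          hS'anti, ← hSS, ← hSS, mul_assoc, hy, ← mul_assoc, hx, mul_assoc]
    | add x y hx hy =>
        rw [map_add (RingQuot.mkAlgHom k (BosRel k t N p ξ)) x y, map_add S,
          map_add S, add_mul, hx, hy, mul_add]
end
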